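/- arXiv:math/0606562 — 13 statements merged into one kernel-verified Lean document; each statement's English description precedes it below -/
import Mathlib

section
/- Suppose (M₀ − r₀)(M₁ − r₁) = 0 or (M₁ − r₁⁻¹)(M₀ − r₀⁻¹) = 0. Then the simultaneous triangularization problem is unsolvable: there exist no f₀, f₁ ∈ ℂ and K ∈ SL(2,ℂ) with K·M₀ = M₀Δ·K and K·M₁ = M₁Δ·K. -/
open Matrix Complex

lemma inv_sub_self_ne_zero (r : ℂ) (h0 : r ≠ 0) (h1 : r ≠ 1) (hm : r ≠ -1) :
    r⁻¹ - r ≠ 0 := by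
  intro hc
  have h2 : r⁻¹ = r := sub_eq_zero.mp hc
  have hrr : r * r = 1 := by
    field_simp at h2
    linear_combination -h2
  have h3 : (r - 1) * (r + 1) = 0 := by linear_combination hrr
  rcases mul_eq_zero.mp h3 with h | h
  · exact h1 (sub_eq_zero.mp h)
  · exact hm (eq_neg_of_add_eq_zero_left h)

theorem stmt0 (M₀ M₁ : Matrix (Fin 2) (Fin 2) ℂ)
    (hM₀ : M₀.det = 1) (hM₁ : M₁.det = 1)
    (r₀ r₁ : ℂ)
    (hr₀0 : r₀ ≠ 0) (hr₀1 : r₀ ≠ 1) (hr₀m : r₀ ≠ -1)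
    (hr₁0 : r₁ ≠ 0) (hr₁1 : r₁ ≠ 1) (hr₁m : r₁ ≠ -1)
    (htr₀ : M₀.trace = r₀ + r₀⁻¹) (htr₁ : M₁.trace = r₁ + r₁⁻¹)
    (h : (M₀ - r₀ • (1 : Matrix (Fin 2) (Fin 2) ℂ)) * (M₁ - r₁ • 1) = 0 ∨
         (M₁ - r₁⁻¹ • (1 : Matrix (Fin 2) (Fin 2) ℂ)) * (M₀ - r₀⁻¹ • 1) = 0) :
    ¬ ∃ (f₀ f₁ : ℂ) (K : Matrix (Fin 2) (Fin 2) ℂ), K.det = 1 ∧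
      K * M₀ = !![r₀, f₀; 0, r₀⁻¹] * K ∧
      K * M₁ = !![r₁, 0; f₁, r₁⁻¹] * K := by
  rintro ⟨f₀, f₁, K, hK, h₀, h₁⟩
  have hKu : IsUnit K.det := by rw [hK]; exact isUnit_one
  have key : ∀ (M A : Matrix (Fin 2) (Fin 2) ℂ) (c : ℂ), K * M = A * K →
      K * (M - c • 1) = (A - c • 1) * K := by
    intro M A c hMA
    rw [mul_sub, sub_mul, hMA]
    congr 1
    simp [mul_smul_comm, smul_mul_assoc]
  have h0ne := inv_sub_self_ne_zero r₀ hr₀0 hr₀1 hr₀m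
  have h1ne := inv_sub_self_ne_zero r₁ hr₁0 hr₁1 hr₁m
  rcases h with hc | hc
  · have e₀ := key M₀ !![r₀, f₀; 0, r₀⁻¹] r₀ h₀
    have e₁ := key M₁ !![r₁, 0; f₁, r₁⁻¹] r₁ h₁
    have hz : (!![r₀, f₀; 0, r₀⁻¹] - r₀ • 1) * (!![r₁, 0; f₁, r₁⁻¹] - r₁ • 1) * K = 0 := by
      rw [mul_assoc, ← e₁, ← mul_assoc, ← e₀, mul_assoc, hc, mul_zero]
    have hz' : (!![r₀, f₀; 0, r₀⁻¹] - r₀ • 1) * (!![r₁, 0; f₁, r₁⁻¹] - r₁ • 1) = 0 := by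
      have := congrArg (· * K⁻¹) hz
      simpa [mul_assoc, Matrix.mul_nonsing_inv K hKu] using this
    have := congrFun (congrFun hz' 1) 1
    simp [Matrix.mul_apply, Fin.sum_univ_two, Matrix.one_apply, Matrix.smul_apply] at this
    rcases this with h | h
    · exact h0ne h
    · exact h1ne h
  · have e₀ := key M₀ !![r₀, f₀; 0, r₀⁻¹] r₀⁻¹ h₀
    have e₁ := key M₁ !![r₁, 0; f₁, r₁⁻¹] r₁⁻¹ h₁
    have hz : (!![r₁, 0; f₁, r₁⁻¹] - r₁⁻¹ • 1) * (!![r₀, f₀; 0, r₀⁻¹] - r₀⁻¹ • 1) * K = 0 := by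
      rw [mul_assoc, ← e₀, ← mul_assoc, ← e₁, mul_assoc, hc, mul_zero]
    have hz' : (!![r₁, 0; f₁, r₁⁻¹] - r₁⁻¹ • 1) * (!![r₀, f₀; 0, r₀⁻¹] - r₀⁻¹ • 1) = 0 := by
      have := congrArg (· * K⁻¹) hz
      simpa [mul_assoc, Matrix.mul_nonsing_inv K hKu] using this
    have := congrFun (congrFun hz' 0) 0
    simp [Matrix.mul_apply, Fin.sum_univ_two, Matrix.one_apply, Matrix.smul_apply] at this
    rcases this with h | h
    · exact h1ne (by linear_combination -h)
    · exact h0ne (by linear_combination -h)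
end

section
/- If M₀ and M₁ commute (M₀M₁ = M₁M₀) and (K, f₀, f₁) is a solution of the simultaneous triangularization problem, then f₀ = 0 and f₁ = 0. -/
open Matrix Complex

theorem stmt3 (M₀ M₁ : Matrix (Fin 2) (Fin 2) ℂ)
    (hM₀ : M₀.det = 1) (hM₁ : M₁.det = 1)
    (r₀ r₁ : ℂ)
    (hr₀0 : r₀ ≠ 0) (hr₀1 : r₀ ≠ 1) (hr₀m : r₀ ≠ -1)
    (hr₁0 : r₁ ≠ 0) (hr₁1 : r₁ ≠ 1) (hr₁m : r₁ ≠ -1)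
    (htr₀ : M₀.trace = r₀ + r₀⁻¹) (htr₁ : M₁.trace = r₁ + r₁⁻¹)
    (hcomm : M₀ * M₁ = M₁ * M₀)
    (K : Matrix (Fin 2) (Fin 2) ℂ) (f₀ f₁ : ℂ)
    (hK : K.det = 1)
    (h₀ : K * M₀ = !![r₀, f₀; 0, r₀⁻¹] * K)
    (h₁ : K * M₁ = !![r₁, 0; f₁, r₁⁻¹] * K) :
    f₀ = 0 ∧ f₁ = 0 := by
  have hKu : IsUnit K := by
    rw [Matrix.isUnit_iff_isUnit_det, hK]; exact isUnit_one
  have key : !![r₀, f₀; 0, r₀⁻¹] * !![r₁, 0; f₁, r₁⁻¹]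
      = !![r₁, 0; f₁, r₁⁻¹] * !![r₀, f₀; 0, r₀⁻¹] := by
    apply hKu.mul_right_cancel
    calc !![r₀, f₀; 0, r₀⁻¹] * !![r₁, 0; f₁, r₁⁻¹] * K
        = !![r₀, f₀; 0, r₀⁻¹] * (K * M₁) := by rw [h₁, mul_assoc]
      _ = K * (M₀ * M₁) := by rw [← mul_assoc, ← h₀, mul_assoc]
      _ = K * (M₁ * M₀) := by rw [hcomm]
      _ = !![r₁, 0; f₁, r₁⁻¹] * (K * M₀) := by rw [← mul_assoc, h₁, mul_assoc]
      _ = !![r₁, 0; f₁, r₁⁻¹] * !![r₀, f₀; 0, r₀⁻¹] * K := by rw [h₀, mul_assoc]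
  have e01 := congrFun (congrFun key 0) 1
  have e10 := congrFun (congrFun key 1) 0
  simp [Matrix.mul_apply, Fin.sum_univ_two] at e01 e10
  have fact : ∀ r : ℂ, r ≠ 0 → r ≠ 1 → r ≠ -1 → r⁻¹ - r ≠ 0 := by
    intro r h0 h1 hm h
    have h2 : (r - 1) * (r + 1) = 0 := by
      field_simp at h
      linear_combination -h
    rcases mul_eq_zero.mp h2 with h' | h'
    · exact h1 (by linear_combination h')
    · exact hm (by linear_combination h')
  constructor
  · have : f₀ * (r₁⁻¹ - r₁) = 0 := by linear_combination e01
    exact (mul_eq_zero.mp this).resolve_right (fact r₁ hr₁0 hr₁1 hr₁m)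
  · have : f₁ * (r₀⁻¹ - r₀) = 0 := by linear_combination e10
    exact (mul_eq_zero.mp this).resolve_right (fact r₀ hr₀0 hr₀1 hr₀m)
end

section
/- If M₀M₁ ≠ M₁M₀ and (M₀ − r₀)(M₁ − r₁⁻¹) = 0, then for every f₀ ∈ ℂ with f₀ ≠ 0 there exists K ∈ SL(2,ℂ) such that K·M₀·K⁻¹ = [[r₀, f₀], [0, r₀⁻¹]] and K·M₁·K⁻¹ = diag(r₁, r₁⁻¹). -/
/-!
By Cayley–Hamilton (M₁ - r₁)(M₁ - r₁⁻¹) = 0, so nonzero rows of M₁ - r₁⁻¹ and of M₁ - r₁ (which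
exist as r₁ ≠ r₁⁻¹) are left eigenvectors of M₁ for the distinct eigenvalues r₁ and r₁⁻¹. Stacked,
with one rescaled to make the determinant 1, they form K ∈ SL₂ with K M₁ K⁻¹ = diag(r₁, r₁⁻¹).

For N = K M₀ K⁻¹ the hypothesis becomes (N - r₀) · diag(r₁ - r₁⁻¹, 0) = 0: the first column of N is
(r₀, 0), so N = [[r₀, α], [0, r₀⁻¹]] since det N = 1. If α = 0 then N would commute with the
diagonal matrix K M₁ K⁻¹, hence M₀ with M₁; so α ≠ 0. Finally diag(s, s⁻¹) with s² = f₀ / α fixes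
diagonal matrices and turns α into f₀.
-/

open Matrix Polynomial

namespace Matrix

section Conj

variable {n R : Type*} [Fintype n] [DecidableEq n] [CommRing R] {K : Matrix n n R}

lemma conj_mul_conj (hK : IsUnit K.det) (A B : Matrix n n R) :
    K * A * K⁻¹ * (K * B * K⁻¹) = K * (A * B) * K⁻¹ := by
  simp only [Matrix.mul_assoc, nonsing_inv_mul_cancel_left _ _ hK]

lemma conj_sub_smul_one (hK : IsUnit K.det) (A : Matrix n n R) (c : R) :
    K * (A - c • 1) * K⁻¹ = K * A * K⁻¹ - c • 1 := by
  rw [Matrix.mul_sub, Matrix.sub_mul, Matrix.mul_smul, Matrix.mul_one, Matrix.smul_mul,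
    mul_nonsing_inv _ hK]

lemma commute_of_commute_conj (hK : IsUnit K.det) {A B : Matrix n n R}
    (h : Commute (K * A * K⁻¹) (K * B * K⁻¹)) : Commute A B := by
  have hconj := congrArg (fun X => K⁻¹ * X * K) h.eq
  show A * B = B * A
  simpa only [conj_mul_conj hK, Matrix.mul_assoc, nonsing_inv_mul_cancel_left _ _ hK,
    nonsing_inv_mul _ hK, Matrix.one_mul, Matrix.mul_one] using hconj

lemma conj_conj (D K A : Matrix n n R) :
    D * (K * A * K⁻¹) * D⁻¹ = D * K * A * (D * K)⁻¹ := by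
  simp only [Matrix.mul_inv_rev, Matrix.mul_assoc]

lemma diagonal_conj_diagonal {d : n → R} (hd : IsUnit (diagonal d).det) (e : n → R) :
    diagonal d * diagonal e * (diagonal d)⁻¹ = diagonal e := by
  rw [commute_diagonal d e, mul_nonsing_inv_cancel_right _ _ hd]

end Conj

section Eigenvectors

variable {n : Type*} [Fintype n] [DecidableEq n]

lemma exists_vecMul_eq_smul {R : Type*} [CommRing R] {M : Matrix n n R} {a b : R}
    (h : (M - b • 1) * (M - a • 1) = 0) (hM : M ≠ b • 1) : ∃ w ≠ 0, w ᵥ* M = a • w := by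
  obtain ⟨i, hi⟩ : ∃ i, (M - b • 1) i ≠ 0 := by
    by_contra! h'
    exact hM (sub_eq_zero.mp (funext h'))
  refine ⟨(M - b • 1) i, hi, ?_⟩
  have hrow : (M - b • 1) i ᵥ* (M - a • 1) = 0 := by
    rw [← row_apply' (M - b • 1), ← single_one_vecMul, vecMul_vecMul, h, vecMul_zero]
  rwa [vecMul_sub, vecMul_smul, vecMul_one, sub_eq_zero] at hrow

lemma mul_eq_diagonal_mul_of_vecMul_eq_smul {R : Type*} [CommRing R] {K M : Matrix n n R}
    {μ : n → R} (hKM : ∀ i, K i ᵥ* M = μ i • K i) : K * M = diagonal μ * K := by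
  ext i j
  simpa [diagonal_mul, vecMul, mul_apply'] using congrFun (hKM i) j

lemma isUnit_of_vecMul_eq_smul {𝕜 : Type*} [Field 𝕜] {K M : Matrix n n 𝕜} {μ : n → 𝕜}
    (hμ : Function.Injective μ) (hK : ∀ i, K i ≠ 0) (hKM : ∀ i, K i ᵥ* M = μ i • K i) :
    IsUnit K :=
  linearIndependent_rows_iff_isUnit.mp <|
    Module.End.eigenvectors_linearIndependent' (vecMulLinear M) μ hμ K.row fun i =>
      ⟨Module.End.mem_eigenspace_iff.mpr (hKM i), hK i⟩

end Eigenvectors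

lemma sub_smul_one_mul_sub_smul_one_eq_zero {R : Type*} [CommRing R] [Nontrivial R]
    {M : Matrix (Fin 2) (Fin 2) R} {a b : R} (hdet : M.det = a * b) (htr : M.trace = a + b) :
    (M - a • 1) * (M - b • 1) = 0 := by
  have hchar : M.charpoly = (X - C a) * (X - C b) := by
    rw [charpoly_fin_two, htr, hdet, C_add, C_mul]
    ring
  simpa [hchar, Algebra.algebraMap_eq_smul_one] using M.aeval_self_charpoly

variable {𝕜 : Type*} [Field 𝕜]

lemma exists_det_eq_one_conj_eq_diagonal {M : Matrix (Fin 2) (Fin 2) 𝕜} {a b : 𝕜}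
    (hdet : M.det = a * b) (htr : M.trace = a + b) (hab : a ≠ b) :
    ∃ K : Matrix (Fin 2) (Fin 2) 𝕜, K.det = 1 ∧ K * M * K⁻¹ = diagonal ![a, b] := by
  have hne : ∀ {c d : 𝕜}, c ≠ d → M.trace = c + d → M ≠ d • 1 := by
    rintro c d hcd htr rfl
    rw [trace_smul, trace_one, Fintype.card_fin, smul_eq_mul] at htr
    exact hcd (by linear_combination -htr)
  obtain ⟨w, hw, hwM⟩ := exists_vecMul_eq_smul
    (sub_smul_one_mul_sub_smul_one_eq_zero (by rw [hdet, mul_comm]) (by rw [htr, add_comm]))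
    (hne hab htr)
  obtain ⟨v, hv, hvM⟩ := exists_vecMul_eq_smul (sub_smul_one_mul_sub_smul_one_eq_zero hdet htr)
    (hne hab.symm (htr.trans (add_comm a b)))
  set K₀ : Matrix (Fin 2) (Fin 2) 𝕜 := of ![w, v]
  have hK₀ : K₀.det ≠ 0 := by
    refine ((isUnit_iff_isUnit_det _).mp
      (isUnit_of_vecMul_eq_smul (M := M) (μ := ![a, b]) ?_ ?_ ?_)).ne_zero
    · intro i j
      fin_cases i <;> fin_cases j <;> simp [hab, hab.symm]
    · simpa [Fin.forall_fin_two] using ⟨hw, hv⟩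
    · simpa [Fin.forall_fin_two] using ⟨hwM, hvM⟩
  set K := K₀.updateRow 0 (K₀.det⁻¹ • K₀ 0)
  have hK : K.det = 1 := by
    rw [det_updateRow_smul, updateRow_eq_self, inv_mul_cancel₀ hK₀]
  have hKM : K * M = diagonal ![a, b] * K := by
    refine mul_eq_diagonal_mul_of_vecMul_eq_smul (Fin.forall_fin_two.mpr ⟨?_, hvM⟩)
    change (K₀.det⁻¹ • w) ᵥ* M = a • K₀.det⁻¹ • w
    rw [smul_vecMul, hwM, smul_comm]
  exact ⟨K, hK, by rw [hKM, mul_nonsing_inv_cancel_right _ _ (by simp [hK])]⟩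

lemma exists_eq_upperTriangular_of_mul_diagonal_eq_zero {N : Matrix (Fin 2) (Fin 2) 𝕜}
    {a b c : 𝕜} (hab : a ≠ b) (hdet : N.det = 1)
    (h : (N - c • 1) * (diagonal ![a, b] - b • 1) = 0) :
    ∃ α, N = !![c, α; 0, c⁻¹] := by
  have hab' : a - b ≠ 0 := sub_ne_zero.mpr hab
  have h00 : (N 0 0 - c) * (a - b) = 0 := by
    simpa [mul_apply, Fin.sum_univ_two] using congrFun₂ h 0 0
  have h10 : N 1 0 * (a - b) = 0 := by
    simpa [mul_apply, Fin.sum_univ_two] using congrFun₂ h 1 0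
  replace h00 : N 0 0 = c := sub_eq_zero.mp ((mul_eq_zero.mp h00).resolve_right hab')
  replace h10 : N 1 0 = 0 := (mul_eq_zero.mp h10).resolve_right hab'
  have h11 : N 1 1 = c⁻¹ := by
    rw [det_fin_two, h00, h10, mul_zero, sub_zero] at hdet
    exact eq_inv_of_mul_eq_one_right hdet
  exact ⟨N 0 1, (eta_fin_two N).trans (by rw [h00, h10, h11])⟩

lemma diagonal_conj_upperTriangular {s : 𝕜} (hs : s ≠ 0) (a b α : 𝕜) :
    diagonal ![s, s⁻¹] * !![a, α; 0, b] * (diagonal ![s, s⁻¹])⁻¹ = !![a, s ^ 2 * α; 0, b] := by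
  have hinv : diagonal ![s⁻¹, s] * diagonal ![s, s⁻¹] = 1 := by
    rw [diagonal_mul_diagonal, ← diagonal_one]
    congr 1
    ext i
    fin_cases i <;> simp [hs]
  rw [inv_eq_left_inv hinv, diagonal_vec2, diagonal_vec2, mul_fin_two, mul_fin_two]
  simp [field, sq]

end Matrix

theorem stmt4_general (M₀ M₁ : Matrix (Fin 2) (Fin 2) ℂ)
    (hM₀ : M₀.det = 1) (hM₁ : M₁.det = 1)
    (r₀ r₁ : ℂ)
    (hr₁0 : r₁ ≠ 0) (hr₁1 : r₁ ≠ 1) (hr₁m : r₁ ≠ -1)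
    (htr₁ : M₁.trace = r₁ + r₁⁻¹)
    (hcomm : M₀ * M₁ ≠ M₁ * M₀)
    (h : (M₀ - r₀ • (1 : Matrix (Fin 2) (Fin 2) ℂ)) * (M₁ - r₁⁻¹ • 1) = 0) :
    ∀ f₀ : ℂ, f₀ ≠ 0 → ∃ K : Matrix (Fin 2) (Fin 2) ℂ, K.det = 1 ∧
      K * M₀ * K⁻¹ = !![r₀, f₀; 0, r₀⁻¹] ∧
      K * M₁ * K⁻¹ = !![r₁, 0; 0, r₁⁻¹] := by
  intro f₀ hf₀
  have hr₁ : r₁ ≠ r₁⁻¹ := by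
    intro h'
    have hsq : r₁ * r₁ = 1 := by rw [← mul_inv_cancel₀ hr₁0, ← h']
    exact (mul_self_eq_one_iff.mp hsq).elim hr₁1 hr₁m
  obtain ⟨K, hK, hKM₁⟩ := exists_det_eq_one_conj_eq_diagonal
    (by rw [hM₁, mul_inv_cancel₀ hr₁0]) htr₁ hr₁
  have hKu : IsUnit K.det := hK ▸ isUnit_one
  obtain ⟨α, hKM₀⟩ : ∃ α, K * M₀ * K⁻¹ = !![r₀, α; 0, r₀⁻¹] := by
    refine exists_eq_upperTriangular_of_mul_diagonal_eq_zero hr₁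
      (by rw [det_conj ((isUnit_iff_isUnit_det K).mpr hKu), hM₀]) ?_
    rw [← hKM₁, ← conj_sub_smul_one hKu, ← conj_sub_smul_one hKu, conj_mul_conj hKu, h,
      Matrix.mul_zero, Matrix.zero_mul]
  have hα : α ≠ 0 := by
    rintro rfl
    refine hcomm (commute_of_commute_conj hKu ?_).eq
    rw [hKM₁, hKM₀, ← diagonal_vec2]
    exact commute_diagonal _ _
  obtain ⟨s, hs⟩ := IsAlgClosed.exists_pow_nat_eq (f₀ / α) two_pos
  have hs0 : s ≠ 0 := (pow_ne_zero_iff two_ne_zero).mp (hs ▸ div_ne_zero hf₀ hα)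
  refine ⟨diagonal ![s, s⁻¹] * K, by simp [det_mul, hK, hs0], ?_, ?_⟩
  · rw [← conj_conj, hKM₀, diagonal_conj_upperTriangular hs0, hs, div_mul_cancel₀ _ hα]
  · rw [← conj_conj, hKM₁, diagonal_conj_diagonal (by simp [hs0]), diagonal_vec2]

theorem stmt4 (M₀ M₁ : Matrix (Fin 2) (Fin 2) ℂ)
    (hM₀ : M₀.det = 1) (hM₁ : M₁.det = 1)
    (r₀ r₁ : ℂ)
    (hr₀0 : r₀ ≠ 0) (hr₀1 : r₀ ≠ 1) (hr₀m : r₀ ≠ -1)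
    (hr₁0 : r₁ ≠ 0) (hr₁1 : r₁ ≠ 1) (hr₁m : r₁ ≠ -1)
    (htr₀ : M₀.trace = r₀ + r₀⁻¹) (htr₁ : M₁.trace = r₁ + r₁⁻¹)
    (hcomm : M₀ * M₁ ≠ M₁ * M₀)
    (h : (M₀ - r₀ • (1 : Matrix (Fin 2) (Fin 2) ℂ)) * (M₁ - r₁⁻¹ • 1) = 0) :
    ∀ f₀ : ℂ, f₀ ≠ 0 → ∃ K : Matrix (Fin 2) (Fin 2) ℂ, K.det = 1 ∧
      K * M₀ * K⁻¹ = !![r₀, f₀; 0, r₀⁻¹] ∧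
      K * M₁ * K⁻¹ = !![r₁, 0; 0, r₁⁻¹] :=
  stmt4_general M₀ M₁ hM₀ hM₁ r₀ r₁ hr₁0 hr₁1 hr₁m htr₁ hcomm h
end

section
/- Suppose M₀M₁ ≠ M₁M₀, (M₀ − r₀)(M₁ − r₁⁻¹) = 0, and f₀ ∈ ℂ with f₀ ≠ 0. If K and K′ in SL(2,ℂ) both satisfy K·M₀·K⁻¹ = [[r₀, f₀], [0, r₀⁻¹]] and K·M₁·K⁻¹ = diag(r₁, r₁⁻¹) (and likewise for K′), then K′ = K or K′ = −K; that is, for each such f₀ there are exactly two solutions, differing only by sign. -/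
open Matrix Complex

theorem stmt6 (M₀ M₁ : Matrix (Fin 2) (Fin 2) ℂ)
    (hM₀ : M₀.det = 1) (hM₁ : M₁.det = 1)
    (r₀ r₁ : ℂ)
    (hr₀0 : r₀ ≠ 0) (hr₀1 : r₀ ≠ 1) (hr₀m : r₀ ≠ -1)
    (hr₁0 : r₁ ≠ 0) (hr₁1 : r₁ ≠ 1) (hr₁m : r₁ ≠ -1)
    (htr₀ : M₀.trace = r₀ + r₀⁻¹) (htr₁ : M₁.trace = r₁ + r₁⁻¹)
    (hcomm : M₀ * M₁ ≠ M₁ * M₀)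
    (h : (M₀ - r₀ • (1 : Matrix (Fin 2) (Fin 2) ℂ)) * (M₁ - r₁⁻¹ • 1) = 0)
    (f₀ : ℂ) (hf₀ : f₀ ≠ 0)
    (K K' : Matrix (Fin 2) (Fin 2) ℂ)
    (hK : K.det = 1) (hK' : K'.det = 1)
    (h₀ : K * M₀ * K⁻¹ = !![r₀, f₀; 0, r₀⁻¹])
    (h₁ : K * M₁ * K⁻¹ = !![r₁, 0; 0, r₁⁻¹])
    (h₀' : K' * M₀ * K'⁻¹ = !![r₀, f₀; 0, r₀⁻¹])
    (h₁' : K' * M₁ * K'⁻¹ = !![r₁, 0; 0, r₁⁻¹]) :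
    K' = K ∨ K' = -K := by
  have hKu : IsUnit K.det := by rw [hK]; exact isUnit_one
  have hK'u : IsUnit K'.det := by rw [hK']; exact isUnit_one
  set C := K' * K⁻¹ with hCdef
  have hCK : C * K = K' := by
    rw [hCdef, mul_assoc, Matrix.nonsing_inv_mul K hKu, mul_one]
  have key : ∀ M : Matrix (Fin 2) (Fin 2) ℂ,
      C * (K * M * K⁻¹) = (K' * M * K'⁻¹) * C := by
    intro M
    rw [hCdef, mul_assoc K',
      show K⁻¹ * (K * M * K⁻¹) = M * K⁻¹ from by
        rw [← mul_assoc, ← mul_assoc, Matrix.nonsing_inv_mul K hKu, one_mul],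
      mul_assoc (K' * M),
      show K'⁻¹ * (K' * K⁻¹) = K⁻¹ from by
        rw [← mul_assoc, Matrix.nonsing_inv_mul K' hK'u, one_mul],
      mul_assoc K']
  have hc1 : C * !![r₁, 0; 0, r₁⁻¹] = !![r₁, 0; 0, r₁⁻¹] * C := by
    have t := key M₁; rw [h₁, h₁'] at t; exact t
  have hc0 : C * !![r₀, f₀; 0, r₀⁻¹] = !![r₀, f₀; 0, r₀⁻¹] * C := by
    have t := key M₀; rw [h₀, h₀'] at t; exact t
  have hr₁ne : r₁⁻¹ ≠ r₁ := by
    intro hrr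
    have h2 : r₁ * r₁ = 1 := by field_simp at hrr; linear_combination -hrr
    rcases mul_self_eq_one_iff.mp h2 with h' | h' <;> tauto
  have e01 := congrFun (congrFun hc1 0) 1
  have e10 := congrFun (congrFun hc1 1) 0
  simp [Matrix.mul_apply, Fin.sum_univ_two] at e01 e10
  have hC01 : C 0 1 = 0 := by
    rcases mul_eq_mul_left_iff.mp
        (show C 0 1 * r₁⁻¹ = C 0 1 * r₁ by linear_combination e01) with h' | h'
    · exact absurd h' hr₁ne
    · exact h'
  have hC10 : C 1 0 = 0 := by
    rcases mul_eq_mul_left_iff.mp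
        (show C 1 0 * r₁ = C 1 0 * r₁⁻¹ by linear_combination e10) with h' | h'
    · exact absurd h'.symm hr₁ne
    · exact h'
  have f01 := congrFun (congrFun hc0 0) 1
  simp [Matrix.mul_apply, Fin.sum_univ_two, hC01] at f01
  have heq : C 0 0 = C 1 1 :=
    mul_right_cancel₀ hf₀ (by linear_combination f01)
  have hdetC : C.det = 1 := by
    rw [hCdef, Matrix.det_mul, hK', Matrix.det_nonsing_inv, hK, one_mul]
    simp
  rw [Matrix.det_fin_two, hC01, hC10, ← heq] at hdetC
  have hsq : C 0 0 * C 0 0 = 1 := by linear_combination hdetC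
  rcases mul_self_eq_one_iff.mp hsq with ha | ha
  · left
    rw [← hCK]
    have hC : C = 1 := by
      ext i j
      fin_cases i <;> fin_cases j <;>
        simp [ha, hC01, hC10, ← heq, Matrix.one_apply]
    rw [hC, one_mul]
  · right
    rw [← hCK]
    have hC : C = -1 := by
      ext i j
      fin_cases i <;> fin_cases j <;>
        simp [ha, hC01, hC10, ← heq, Matrix.one_apply]
    rw [hC, neg_one_mul]
end

section
/- The equation (M₀ − r₀)(M₁ − r₁⁻¹) = 0 holds if and only if the equation (M₁ − r₁)(M₀ − r₀⁻¹) = 0 holds. -/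
open Matrix Complex

lemma adj2 (X : Matrix (Fin 2) (Fin 2) ℂ) : X.adjugate = X.trace • 1 - X := by
  ext i j
  fin_cases i <;> fin_cases j <;>
    simp [Matrix.adjugate_fin_two, Matrix.trace_fin_two, Matrix.one_apply] <;> ring

lemma key (A B : Matrix (Fin 2) (Fin 2) ℂ) (a b : ℂ)
    (ha : A.trace = a + a⁻¹) (hb : B.trace = b + b⁻¹)
    (h : (A - a • 1) * (B - b⁻¹ • 1) = 0) :
    (B - b • 1) * (A - a⁻¹ • 1) = 0 := by
  have h2 : ((A - a • 1) * (B - b⁻¹ • 1)).adjugate = 0 := by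
    rw [h]; simp
  rw [Matrix.adjugate_mul_distrib, adj2, adj2] at h2
  have e1 : (A - a • (1 : Matrix (Fin 2) (Fin 2) ℂ)).trace • (1 : Matrix (Fin 2) (Fin 2) ℂ)
      - (A - a • 1) = -(A - a⁻¹ • 1) := by
    simp [Matrix.trace_sub, Matrix.trace_smul, Matrix.trace_one, ha, sub_smul, add_smul]
    module
  have e2 : (B - b⁻¹ • (1 : Matrix (Fin 2) (Fin 2) ℂ)).trace • (1 : Matrix (Fin 2) (Fin 2) ℂ)
      - (B - b⁻¹ • 1) = -(B - b • 1) := by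
    simp [Matrix.trace_sub, Matrix.trace_smul, Matrix.trace_one, hb, sub_smul, add_smul]
    module
  rw [e1, e2, neg_mul_neg] at h2
  exact h2

theorem stmt7 (M₀ M₁ : Matrix (Fin 2) (Fin 2) ℂ)
    (hM₀ : M₀.det = 1) (hM₁ : M₁.det = 1)
    (r₀ r₁ : ℂ)
    (hr₀0 : r₀ ≠ 0) (hr₀1 : r₀ ≠ 1) (hr₀m : r₀ ≠ -1)
    (hr₁0 : r₁ ≠ 0) (hr₁1 : r₁ ≠ 1) (hr₁m : r₁ ≠ -1)
    (htr₀ : M₀.trace = r₀ + r₀⁻¹) (htr₁ : M₁.trace = r₁ + r₁⁻¹) :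
    (M₀ - r₀ • (1 : Matrix (Fin 2) (Fin 2) ℂ)) * (M₁ - r₁⁻¹ • 1) = 0 ↔
    (M₁ - r₁ • (1 : Matrix (Fin 2) (Fin 2) ℂ)) * (M₀ - r₀⁻¹ • 1) = 0 := by
  constructor
  · exact key M₀ M₁ r₀ r₁ htr₀ htr₁
  · exact key M₁ M₀ r₁ r₀ htr₁ htr₀
end

section
/- If M₀M₁ ≠ M₁M₀ and (M₀ − r₀⁻¹)(M₁ − r₁) = 0, then for every f₁ ∈ ℂ with f₁ ≠ 0 there exists K ∈ SL(2,ℂ) such that K·M₀·K⁻¹ = diag(r₀, r₀⁻¹) and K·M₁·K⁻¹ = [[r₁, 0], [f₁, r₁⁻¹]]. Conversely, if M₀M₁ ≠ M₁M₀ and there exist K ∈ SL(2,ℂ) and f₁ ∈ ℂ with K·M₀·K⁻¹ = diag(r₀, r₀⁻¹) and K·M₁·K⁻¹ = [[r₁, 0], [f₁, r₁⁻¹]], then (M₀ − r₀⁻¹)(M₁ − r₁) = 0 and f₁ ≠ 0. -/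
open Matrix

noncomputable def colP (a b : Fin 2 → ℂ) : Matrix (Fin 2) (Fin 2) ℂ :=
  Matrix.of ![![a 0, b 0], ![a 1, b 1]]

lemma mul_colP (A : Matrix (Fin 2) (Fin 2) ℂ) (a b : Fin 2 → ℂ) (T : Matrix (Fin 2) (Fin 2) ℂ)
    (h1 : A.mulVec a = T 0 0 • a + T 1 0 • b)
    (h2 : A.mulVec b = T 0 1 • a + T 1 1 • b) :
    A * colP a b = colP a b * T := by
  have ha := fun i => congrFun h1 i
  have hb := fun i => congrFun h2 i
  simp only [mulVec, dotProduct, Fin.sum_univ_two, Pi.add_apply, Pi.smul_apply,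
    smul_eq_mul] at ha hb
  ext i j
  fin_cases i <;> fin_cases j <;>
    simp [colP, mul_apply, Fin.sum_univ_two] <;>
    [exact (ha 0).trans (by ring); exact (hb 0).trans (by ring);
     exact (ha 1).trans (by ring); exact (hb 1).trans (by ring)]

lemma detP_ne (A : Matrix (Fin 2) (Fin 2) ℂ) (a b : Fin 2 → ℂ) (α β : ℂ)
    (ha : a ≠ 0) (hb : b ≠ 0) (hαβ : α ≠ β)
    (hAa : A.mulVec a = α • a) (hAb : A.mulVec b = β • b) :
    (colP a b).det ≠ 0 := by
  intro hdet
  obtain ⟨v, hv0, hv⟩ := Matrix.exists_mulVec_eq_zero_iff.mpr hdet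
  have h1 : v 0 • a + v 1 • b = (0 : Fin 2 → ℂ) := by
    funext i
    have h := congrFun hv i
    fin_cases i <;>
    · simp only [colP, mulVec, dotProduct, Fin.sum_univ_two, Matrix.of_apply,
        Fin.mk_zero, Fin.mk_one, Fin.isValue,
        Matrix.cons_val', Matrix.cons_val_zero, Matrix.cons_val_one, Matrix.head_cons,
        Matrix.head_fin_const, Pi.zero_apply, Matrix.empty_val', Matrix.cons_val_fin_one] at h ⊢
      simp only [Pi.add_apply, Pi.smul_apply, smul_eq_mul, Pi.zero_apply]
      linear_combination h
  have h2 : v 0 • (α • a) + v 1 • (β • b) = (0 : Fin 2 → ℂ) := by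
    rw [← hAa, ← hAb, ← mulVec_smul, ← mulVec_smul, ← mulVec_add, h1, mulVec_zero]
  have h3 : (v 1 * (β - α)) • b = (v 0 • (α • a) + v 1 • (β • b)) - α • (v 0 • a + v 1 • b) := by
    module
  rw [h1, h2] at h3
  simp only [smul_zero, sub_zero, zero_sub, neg_zero] at h3
  have hd0 : v 1 = 0 := by
    rcases smul_eq_zero.mp h3 with h | h
    · rcases mul_eq_zero.mp h with h | h
      · exact h
      · exact absurd (sub_eq_zero.mp h).symm hαβ
    · exact absurd h hb
  have hc0 : v 0 = 0 := by
    rw [hd0, zero_smul, add_zero] at h1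
    rcases smul_eq_zero.mp h1 with h | h
    · exact h
    · exact absurd h ha
  apply hv0
  funext i
  fin_cases i
  · exact hc0
  · exact hd0

lemma comm_of_eigs (A B : Matrix (Fin 2) (Fin 2) ℂ) (a b : Fin 2 → ℂ) (α β γ δ : ℂ)
    (ha : a ≠ 0) (hb : b ≠ 0) (hαβ : α ≠ β)
    (hAa : A.mulVec a = α • a) (hAb : A.mulVec b = β • b)
    (hBa : B.mulVec a = γ • a) (hBb : B.mulVec b = δ • b) : A * B = B * A := by
  have hdet := detP_ne A a b α β ha hb hαβ hAa hAb
  have hA : A * colP a b = colP a b * !![α, 0; 0, β] := by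
    apply mul_colP <;> simp [hAa, hAb]
  have hB : B * colP a b = colP a b * !![γ, 0; 0, δ] := by
    apply mul_colP <;> simp [hBa, hBb]
  have hDD : (!![α, 0; 0, β] : Matrix (Fin 2) (Fin 2) ℂ) * !![γ, 0; 0, δ]
      = !![γ, 0; 0, δ] * !![α, 0; 0, β] := by
    ext i j; fin_cases i <;> fin_cases j <;> simp [mul_apply, Fin.sum_univ_two, mul_comm]
  have hu : IsUnit (colP a b).det := isUnit_iff_ne_zero.mpr hdet
  have key : (A * B) * colP a b = (B * A) * colP a b := by
    calc (A * B) * colP a b = colP a b * (!![α,0;0,β] * !![γ,0;0,δ]) := by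
          rw [mul_assoc, hB, ← mul_assoc, hA, mul_assoc]
      _ = colP a b * !![γ,0;0,δ] * !![α,0;0,β] := by rw [hDD, ← mul_assoc]
      _ = (B * A) * colP a b := by rw [← hB, mul_assoc, ← hA, ← mul_assoc]
  calc A * B = (A * B) * colP a b * (colP a b)⁻¹ :=
        (Matrix.mul_nonsing_inv_cancel_right _ _ hu).symm
    _ = (B * A) * colP a b * (colP a b)⁻¹ := by rw [key]
    _ = B * A := Matrix.mul_nonsing_inv_cancel_right _ _ hu

lemma CH2 (M : Matrix (Fin 2) (Fin 2) ℂ) : M * M = M.trace • M - M.det • 1 := by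
  ext i j
  fin_cases i <;> fin_cases j <;>
    simp [mul_apply, Fin.sum_univ_two, Matrix.trace_fin_two, Matrix.det_fin_two,
      Matrix.one_apply] <;> ring

lemma CHfact (M : Matrix (Fin 2) (Fin 2) ℂ) (r : ℂ) (hr : r ≠ 0)
    (hdet : M.det = 1) (htr : M.trace = r + r⁻¹) :
    (M - r⁻¹ • 1) * (M - r • 1) = 0 := by
  rw [Matrix.det_fin_two] at hdet
  rw [Matrix.trace_fin_two] at htr
  have hmic : r * r⁻¹ = 1 := mul_inv_cancel₀ hr
  ext i j
  fin_cases i <;> fin_cases j <;>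
    simp only [Matrix.mul_apply, Fin.sum_univ_two, Matrix.sub_apply, Matrix.smul_apply,
      Matrix.one_apply, Fin.mk_zero, Fin.mk_one, Fin.isValue, smul_eq_mul, mul_one, mul_zero,
      Matrix.zero_apply, if_true, one_ne_zero, zero_ne_one, if_false, ite_true, ite_false,
      reduceCtorEq]
  · linear_combination -hdet + M 0 0 * htr + hmic
  · linear_combination M 0 1 * htr
  · linear_combination M 1 0 * htr
  · linear_combination -hdet + M 1 1 * htr + hmic

lemma det_sub_smul (M : Matrix (Fin 2) (Fin 2) ℂ) (r : ℂ) (hr : r ≠ 0)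
    (hdet : M.det = 1) (htr : M.trace = r + r⁻¹) :
    (M - r • 1).det = 0 := by
  rw [Matrix.det_fin_two] at hdet ⊢
  rw [Matrix.trace_fin_two] at htr
  simp only [Matrix.sub_apply, Matrix.smul_apply, Matrix.one_apply, smul_eq_mul,
    if_true, if_false, Fin.zero_eq_one_iff, Fin.one_eq_zero_iff, ne_eq, OfNat.ofNat_ne_one,
    not_false_eq_true, mul_one, mul_zero, ite_true, ite_false, reduceCtorEq]
  have hmic : r * r⁻¹ = 1 := mul_inv_cancel₀ hr
  linear_combination hdet - r * htr - hmic
lemma eig_of (M : Matrix (Fin 2) (Fin 2) ℂ) (r : ℂ) (v : Fin 2 → ℂ)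
    (h : (M - r • 1).mulVec v = 0) : M.mulVec v = r • v := by
  rw [Matrix.sub_mulVec, Matrix.smul_mulVec, Matrix.one_mulVec] at h
  exact sub_eq_zero.mp h

lemma ne_inv_self (r : ℂ) (h0 : r ≠ 0) (h1 : r ≠ 1) (hm : r ≠ -1) : r ≠ r⁻¹ := by
  intro he
  have h2 : r * r = 1 := by nth_rewrite 1 [he]; exact inv_mul_cancel₀ h0
  rcases mul_self_eq_one_iff.mp h2 with h | h
  · exact h1 h
  · exact hm h

theorem stmt8 (M₀ M₁ : Matrix (Fin 2) (Fin 2) ℂ)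
    (hM₀ : M₀.det = 1) (hM₁ : M₁.det = 1)
    (r₀ r₁ : ℂ)
    (hr₀0 : r₀ ≠ 0) (hr₀1 : r₀ ≠ 1) (hr₀m : r₀ ≠ -1)
    (hr₁0 : r₁ ≠ 0) (hr₁1 : r₁ ≠ 1) (hr₁m : r₁ ≠ -1)
    (htr₀ : M₀.trace = r₀ + r₀⁻¹) (htr₁ : M₁.trace = r₁ + r₁⁻¹)
    (hcomm : M₀ * M₁ ≠ M₁ * M₀) :
    ((M₀ - r₀⁻¹ • (1 : Matrix (Fin 2) (Fin 2) ℂ)) * (M₁ - r₁ • 1) = 0 →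
      ∀ f₁ : ℂ, f₁ ≠ 0 → ∃ K : Matrix (Fin 2) (Fin 2) ℂ, K.det = 1 ∧
        K * M₀ * K⁻¹ = !![r₀, 0; 0, r₀⁻¹] ∧
        K * M₁ * K⁻¹ = !![r₁, 0; f₁, r₁⁻¹]) ∧
    (∀ (K : Matrix (Fin 2) (Fin 2) ℂ) (f₁ : ℂ), K.det = 1 →
      K * M₀ * K⁻¹ = !![r₀, 0; 0, r₀⁻¹] →
      K * M₁ * K⁻¹ = !![r₁, 0; f₁, r₁⁻¹] →
      (M₀ - r₀⁻¹ • (1 : Matrix (Fin 2) (Fin 2) ℂ)) * (M₁ - r₁ • 1) = 0 ∧ f₁ ≠ 0) := by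
  have hr₀ne : r₀ ≠ r₀⁻¹ := ne_inv_self r₀ hr₀0 hr₀1 hr₀m
  have hCH₁ : (M₁ - r₁⁻¹ • 1) * (M₁ - r₁ • 1) = 0 := CHfact M₁ r₁ hr₁0 hM₁ htr₁
  constructor
  · intro h f₁ hf₁
    -- eigenvector p₁ of M₀ for r₀
    have hd0 : (M₀ - r₀ • 1).det = 0 := det_sub_smul M₀ r₀ hr₀0 hM₀ htr₀
    obtain ⟨p₁, hp₁0, hp₁⟩ := Matrix.exists_mulVec_eq_zero_iff.mpr hd0
    have hMp₁ : M₀.mulVec p₁ = r₀ • p₁ := eig_of _ _ _ hp₁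
    set w : Fin 2 → ℂ := M₁.mulVec p₁ - r₁ • p₁ with hwdef
    have hw1 : (M₁ - r₁ • 1).mulVec p₁ = w := by
      rw [Matrix.sub_mulVec, Matrix.smul_mulVec, Matrix.one_mulVec]
    have hM₀w : M₀.mulVec w = r₀⁻¹ • w := by
      apply eig_of
      rw [← hw1, Matrix.mulVec_mulVec, h, Matrix.zero_mulVec]
    have hM₁w : M₁.mulVec w = r₁⁻¹ • w := by
      apply eig_of
      rw [← hw1, Matrix.mulVec_mulVec, hCH₁, Matrix.zero_mulVec]
    by_cases hw : w = 0
    · exfalso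
      have hMp₁' : M₁.mulVec p₁ = r₁ • p₁ := sub_eq_zero.mp hw
      have hd0' : (M₀ - r₀⁻¹ • 1).det = 0 :=
        det_sub_smul M₀ r₀⁻¹ (inv_ne_zero hr₀0) hM₀ (by rw [htr₀, inv_inv, add_comm])
      obtain ⟨q, hq0, hq⟩ := Matrix.exists_mulVec_eq_zero_iff.mpr hd0'
      have hMq : M₀.mulVec q = r₀⁻¹ • q := eig_of _ _ _ hq
      set u : Fin 2 → ℂ := M₁.mulVec q - r₁ • q with hudef
      have hu1 : (M₁ - r₁ • 1).mulVec q = u := by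
        rw [Matrix.sub_mulVec, Matrix.smul_mulVec, Matrix.one_mulVec]
      have hM₀u : M₀.mulVec u = r₀⁻¹ • u := by
        apply eig_of
        rw [← hu1, Matrix.mulVec_mulVec, h, Matrix.zero_mulVec]
      have hM₁u : M₁.mulVec u = r₁⁻¹ • u := by
        apply eig_of
        rw [← hu1, Matrix.mulVec_mulVec, hCH₁, Matrix.zero_mulVec]
      by_cases hu : u = 0
      · exact hcomm (comm_of_eigs M₀ M₁ p₁ q r₀ r₀⁻¹ r₁ r₁ hp₁0 hq0 hr₀ne
          hMp₁ hMq hMp₁' (sub_eq_zero.mp hu))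
      · exact hcomm (comm_of_eigs M₀ M₁ p₁ u r₀ r₀⁻¹ r₁ r₁⁻¹ hp₁0 hu hr₀ne
          hMp₁ hM₀u hMp₁' hM₁u)
    · set p₂ : Fin 2 → ℂ := f₁⁻¹ • w with hp₂def
      have hp₂0 : p₂ ≠ 0 := smul_ne_zero (inv_ne_zero hf₁) hw
      have hM₀p₂ : M₀.mulVec p₂ = r₀⁻¹ • p₂ := by
        rw [hp₂def, Matrix.mulVec_smul, hM₀w, smul_comm]
      have hM₁p₂ : M₁.mulVec p₂ = r₁⁻¹ • p₂ := by
        rw [hp₂def, Matrix.mulVec_smul, hM₁w, smul_comm]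
      have hM₁p₁ : M₁.mulVec p₁ = r₁ • p₁ + f₁ • p₂ := by
        rw [hp₂def, smul_smul, mul_inv_cancel₀ hf₁, one_smul, hwdef]
        module
      have hdP : (colP p₁ p₂).det ≠ 0 :=
        detP_ne M₀ p₁ p₂ r₀ r₀⁻¹ hp₁0 hp₂0 hr₀ne hMp₁ hM₀p₂
      obtain ⟨s, hs⟩ := IsAlgClosed.exists_pow_nat_eq (((colP p₁ p₂).det)⁻¹) (two_pos)
      set Q : Matrix (Fin 2) (Fin 2) ℂ := s • colP p₁ p₂ with hQdef
      have hQdet : Q.det = 1 := by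
        rw [hQdef, Matrix.det_smul, Fintype.card_fin, hs, inv_mul_cancel₀ hdP]
      have hQu : IsUnit Q.det := by rw [hQdet]; exact isUnit_one
      have hM₀Q : M₀ * Q = Q * !![r₀, 0; 0, r₀⁻¹] := by
        rw [hQdef, Matrix.mul_smul, Matrix.smul_mul]
        rw [mul_colP M₀ p₁ p₂ !![r₀, 0; 0, r₀⁻¹] (by simp [hMp₁]) (by simp [hM₀p₂])]
      have hM₁Q : M₁ * Q = Q * !![r₁, 0; f₁, r₁⁻¹] := by
        rw [hQdef, Matrix.mul_smul, Matrix.smul_mul]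
        rw [mul_colP M₁ p₁ p₂ !![r₁, 0; f₁, r₁⁻¹] (by simp [hM₁p₁]) (by simp [hM₁p₂])]
      refine ⟨Q⁻¹, ?_, ?_, ?_⟩
      · rw [Matrix.det_nonsing_inv, hQdet, Ring.inverse_one]
      · rw [Matrix.nonsing_inv_nonsing_inv Q hQu, Matrix.mul_assoc, hM₀Q,
          Matrix.nonsing_inv_mul_cancel_left _ _ hQu]
      · rw [Matrix.nonsing_inv_nonsing_inv Q hQu, Matrix.mul_assoc, hM₁Q,
          Matrix.nonsing_inv_mul_cancel_left _ _ hQu]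
  · intro K f₁ hK hK0 hK1
    have hKu : IsUnit K.det := by rw [hK]; exact isUnit_one
    have hconj : ∀ X : Matrix (Fin 2) (Fin 2) ℂ, K⁻¹ * (K * X * K⁻¹) * K = X := by
      intro X
      simp only [Matrix.mul_assoc, Matrix.nonsing_inv_mul_cancel_left _ _ hKu]
      rw [Matrix.nonsing_inv_mul _ hKu, Matrix.mul_one]
    have hM0' : M₀ = K⁻¹ * !![r₀, 0; 0, r₀⁻¹] * K := by rw [← hK0, hconj]
    have hM1' : M₁ = K⁻¹ * !![r₁, 0; f₁, r₁⁻¹] * K := by rw [← hK1, hconj]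
    have hsm : ∀ (c : ℂ), K⁻¹ * (c • (1 : Matrix (Fin 2) (Fin 2) ℂ)) * K
        = c • (1 : Matrix (Fin 2) (Fin 2) ℂ) := by
      intro c
      rw [Matrix.mul_smul, Matrix.mul_one, Matrix.smul_mul, Matrix.nonsing_inv_mul _ hKu]
    have e1 : M₀ - r₀⁻¹ • 1 = K⁻¹ * (!![r₀, 0; 0, r₀⁻¹] - r₀⁻¹ • 1) * K := by
      rw [Matrix.mul_sub, Matrix.sub_mul, hsm, ← hM0']
    have e2 : M₁ - r₁ • 1 = K⁻¹ * (!![r₁, 0; f₁, r₁⁻¹] - r₁ • 1) * K := by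
      rw [Matrix.mul_sub, Matrix.sub_mul, hsm, ← hM1']
    constructor
    · have hDL : (!![r₀, 0; 0, r₀⁻¹] - r₀⁻¹ • (1 : Matrix (Fin 2) (Fin 2) ℂ))
          * (!![r₁, 0; f₁, r₁⁻¹] - r₁ • 1) = 0 := by
        ext i j
        fin_cases i <;> fin_cases j <;>
          simp [Matrix.mul_apply, Fin.sum_univ_two, Matrix.one_apply] <;> ring
      rw [e1, e2]
      calc K⁻¹ * (!![r₀, 0; 0, r₀⁻¹] - r₀⁻¹ • 1) * K
            * (K⁻¹ * (!![r₁, 0; f₁, r₁⁻¹] - r₁ • 1) * K)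
          = K⁻¹ * ((!![r₀, 0; 0, r₀⁻¹] - r₀⁻¹ • 1)
            * (!![r₁, 0; f₁, r₁⁻¹] - r₁ • 1)) * K := by
            simp only [Matrix.mul_assoc, Matrix.mul_nonsing_inv_cancel_left _ _ hKu]
        _ = 0 := by rw [hDL, Matrix.mul_zero, Matrix.zero_mul]
    · intro hf0
      subst hf0
      apply hcomm
      have hDL : (!![r₀, 0; 0, r₀⁻¹] : Matrix (Fin 2) (Fin 2) ℂ) * !![r₁, 0; (0:ℂ), r₁⁻¹]
          = !![r₁, 0; (0:ℂ), r₁⁻¹] * !![r₀, 0; 0, r₀⁻¹] := by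
        ext i j
        fin_cases i <;> fin_cases j <;>
          simp [Matrix.mul_apply, Fin.sum_univ_two] <;> ring
      rw [hM0', hM1']
      calc K⁻¹ * !![r₀, 0; 0, r₀⁻¹] * K * (K⁻¹ * !![r₁, 0; (0:ℂ), r₁⁻¹] * K)
          = K⁻¹ * (!![r₀, 0; 0, r₀⁻¹] * !![r₁, 0; (0:ℂ), r₁⁻¹]) * K := by
            simp only [Matrix.mul_assoc, Matrix.mul_nonsing_inv_cancel_left _ _ hKu]
        _ = K⁻¹ * (!![r₁, 0; (0:ℂ), r₁⁻¹] * !![r₀, 0; 0, r₀⁻¹]) * K := by rw [hDL]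
        _ = K⁻¹ * !![r₁, 0; (0:ℂ), r₁⁻¹] * K * (K⁻¹ * !![r₀, 0; 0, r₀⁻¹] * K) := by
            simp only [Matrix.mul_assoc, Matrix.mul_nonsing_inv_cancel_left _ _ hKu]
end

section
/- The equation (M₀ − r₀⁻¹)(M₁ − r₁) = 0 holds if and only if the equation (M₁ − r₁⁻¹)(M₀ − r₀) = 0 holds. -/
open Matrix Complex

lemma adj_sub_smul (N : Matrix (Fin 2) (Fin 2) ℂ) (c : ℂ) :
    (N - c • (1 : Matrix (Fin 2) (Fin 2) ℂ)).adjugate = (N.trace - c) • 1 - N := by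
  ext i j
  fin_cases i <;> fin_cases j <;>
    simp [Matrix.adjugate_fin_two, Matrix.trace_fin_two, Matrix.one_apply] <;> ring

lemma key_s9 (M₀ M₁ : Matrix (Fin 2) (Fin 2) ℂ) (r₀ r₁ : ℂ)
    (htr₀ : M₀.trace = r₀ + r₀⁻¹) (htr₁ : M₁.trace = r₁ + r₁⁻¹)
    (h : (M₀ - r₀⁻¹ • (1 : Matrix (Fin 2) (Fin 2) ℂ)) * (M₁ - r₁ • 1) = 0) :
    (M₁ - r₁⁻¹ • (1 : Matrix (Fin 2) (Fin 2) ℂ)) * (M₀ - r₀ • 1) = 0 := by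
  have h2 := congrArg Matrix.adjugate h
  rw [Matrix.adjugate_mul_distrib, Matrix.adjugate_zero, adj_sub_smul, adj_sub_smul,
    htr₀, htr₁, show r₁ + r₁⁻¹ - r₁ = r₁⁻¹ from by ring,
    show r₀ + r₀⁻¹ - r₀⁻¹ = r₀ from by ring] at h2
  rw [← neg_sub (r₁⁻¹ • (1 : Matrix (Fin 2) (Fin 2) ℂ)) M₁,
    ← neg_sub (r₀ • (1 : Matrix (Fin 2) (Fin 2) ℂ)) M₀, neg_mul_neg]
  exact h2

theorem stmt9 (M₀ M₁ : Matrix (Fin 2) (Fin 2) ℂ)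
    (hM₀ : M₀.det = 1) (hM₁ : M₁.det = 1)
    (r₀ r₁ : ℂ)
    (hr₀0 : r₀ ≠ 0) (hr₀1 : r₀ ≠ 1) (hr₀m : r₀ ≠ -1)
    (hr₁0 : r₁ ≠ 0) (hr₁1 : r₁ ≠ 1) (hr₁m : r₁ ≠ -1)
    (htr₀ : M₀.trace = r₀ + r₀⁻¹) (htr₁ : M₁.trace = r₁ + r₁⁻¹) :
    (M₀ - r₀⁻¹ • (1 : Matrix (Fin 2) (Fin 2) ℂ)) * (M₁ - r₁ • 1) = 0 ↔
    (M₁ - r₁⁻¹ • (1 : Matrix (Fin 2) (Fin 2) ℂ)) * (M₀ - r₀ • 1) = 0 := by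
  exact ⟨key_s9 M₀ M₁ r₀ r₁ htr₀ htr₁, key_s9 M₁ M₀ r₁ r₀ htr₁ htr₀⟩
end

section
/- If tr((M₀ − r₀⁻¹)(M₁ − r₁)) = 0, then (M₀ − r₀)(M₁ − r₁⁻¹) = 0 or (M₀ − r₀⁻¹)(M₁ − r₁) = 0. Consequently, if in addition M₀M₁ ≠ M₁M₀, then the simultaneous triangularization problem is solvable: there exist f₀, f₁ ∈ ℂ and K ∈ SL(2,ℂ) with K·M₀ = M₀Δ·K and K·M₁ = M₁Δ·K. -/
/-!
Write `P = M₀ - r₀⁻¹`, `Q = M₁ - r₁`. Both are singular, and for singular `2 × 2` matrices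
`P X P = tr (P X) • P`; hence `PQ · X · QP = tr (QX) tr (PQ) • P = 0` for every `X`, so
`PQ = 0` or `QP = 0`. In the second case `(M₀ - r₀)(M₁ - r₁⁻¹) = adj P · adj Q = adj (QP) = 0`.

For the triangularization, the rows of `K` must be a left `r₁`-eigenvector of `M₁` and a left
`r₀⁻¹`-eigenvector of `M₀`; the remaining entries of `K M₀ K⁻¹` and `K M₁ K⁻¹` are then forced by
the traces. Rows of `M₁ - r₁⁻¹` and of `adj P` are such eigenvectors (Cayley–Hamilton), and two of
them are independent as soon as `(M₁ - r₁⁻¹) P ≠ 0`, which holds because its trace is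
`tr (PQ) + (r₁ - r₁⁻¹) tr P = (r₁ - r₁⁻¹)(r₀ - r₀⁻¹) ≠ 0`.
-/

open Matrix

namespace Matrix

theorem eq_zero_or_eq_zero_of_forall_mul_mul_eq_zero {n R : Type*} [Fintype n] [DecidableEq n]
    [Semiring R] [NoZeroDivisors R] {A B : Matrix n n R} (h : ∀ X, A * X * B = 0) :
    A = 0 ∨ B = 0 := by
  by_contra! hAB
  obtain ⟨i, j, hij⟩ : ∃ i j, A i j ≠ 0 := by
    by_contra! h0
    exact hAB.1 (ext h0)
  obtain ⟨k, l, hkl⟩ : ∃ k l, B k l ≠ 0 := by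
    by_contra! h0
    exact hAB.2 (ext h0)
  have hijkl : (A * (single j k 1 : Matrix n n R) * B) i l = A i j * B k l := by
    simp [mul_apply, single_apply, ite_and]
  exact mul_ne_zero hij hkl (by rw [← hijkl, h, zero_apply])

section Conjugation

variable {n R : Type*} [Fintype n] [DecidableEq n] [CommRing R] {K M : Matrix n n R}

theorem mul_eq_mul_mul_adjugate_mul (hK : K.det = 1) : K * M = K * M * adjugate K * K := by
  rw [Matrix.mul_assoc (K * M), adjugate_mul, hK, one_smul, Matrix.mul_one]

theorem trace_mul_mul_adjugate (hK : K.det = 1) : (K * M * adjugate K).trace = M.trace := by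
  rw [trace_mul_cycle, adjugate_mul, hK, one_smul, Matrix.one_mul]

theorem mul_mul_adjugate_apply_of_vecMul_eq (hK : K.det = 1) {i : n} {b : R}
    (h : K i ᵥ* M = b • K i) : (K * M * adjugate K) i = b • (1 : Matrix n n R) i := by
  rw [mul_apply_eq_vecMul, mul_apply_eq_vecMul, h, smul_vecMul, ← mul_apply_eq_vecMul,
    mul_adjugate, hK, one_smul]

end Conjugation

section FinTwo

variable {R : Type*} [CommRing R]

theorem mul_mul_self_eq_trace_smul_fin_two {P : Matrix (Fin 2) (Fin 2) R} (hP : P.det = 0)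
    (X : Matrix (Fin 2) (Fin 2) R) : P * X * P = (P * X).trace • P := by
  rw [det_fin_two] at hP
  ext i j
  fin_cases i <;> fin_cases j <;>
    simp only [Fin.zero_eta, Fin.mk_one, mul_apply, Fin.sum_univ_two, trace_fin_two, smul_apply,
      smul_eq_mul]
  · linear_combination -X 1 1 * hP
  · linear_combination X 0 1 * hP
  · linear_combination X 1 0 * hP
  · linear_combination -X 0 0 * hP

theorem mul_eq_zero_or_mul_eq_zero_fin_two [NoZeroDivisors R] {P Q : Matrix (Fin 2) (Fin 2) R}
    (hP : P.det = 0) (hQ : Q.det = 0) (h : (P * Q).trace = 0) : P * Q = 0 ∨ Q * P = 0 := by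
  refine eq_zero_or_eq_zero_of_forall_mul_mul_eq_zero fun X => ?_
  calc P * Q * X * (Q * P) = P * (Q * X * Q) * P := by simp only [Matrix.mul_assoc]
    _ = (Q * X).trace • (P * Q * P) := by
      rw [mul_mul_self_eq_trace_smul_fin_two hQ, Matrix.mul_smul, Matrix.smul_mul,
        Matrix.mul_assoc]
    _ = 0 := by rw [mul_mul_self_eq_trace_smul_fin_two hP, h, zero_smul, smul_zero]

theorem adjugate_eq_trace_smul_one_sub_fin_two (A : Matrix (Fin 2) (Fin 2) R) :
    adjugate A = A.trace • 1 - A := by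
  ext i j
  fin_cases i <;> fin_cases j <;> simp [adjugate_fin_two, trace_fin_two]

section Eigenvalues

variable {M : Matrix (Fin 2) (Fin 2) R} {a b : R}

theorem det_sub_smul_one_eq_zero_fin_two (htr : M.trace = a + b) (hdet : M.det = a * b) :
    (M - a • 1).det = 0 := by
  rw [trace_fin_two] at htr
  rw [det_fin_two] at hdet ⊢
  simp only [sub_apply, smul_apply, smul_eq_mul, one_apply_eq, one_apply_ne, ne_eq, zero_ne_one,
    one_ne_zero, not_false_eq_true, mul_one, mul_zero, sub_zero]
  linear_combination hdet - a * htr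

theorem adjugate_sub_smul_one_fin_two (htr : M.trace = a + b) :
    adjugate (M - a • 1) = -(M - b • 1) := by
  rw [adjugate_eq_trace_smul_one_sub_fin_two, trace_sub, trace_smul, trace_one, htr,
    Fintype.card_fin]
  module

theorem sub_smul_one_mul_sub_smul_one_fin_two (htr : M.trace = a + b) (hdet : M.det = a * b) :
    (M - a • 1) * (M - b • 1) = 0 := by
  rw [← neg_neg (M - b • 1), ← adjugate_sub_smul_one_fin_two htr, Matrix.mul_neg, mul_adjugate,
    det_sub_smul_one_eq_zero_fin_two htr hdet, zero_smul, neg_zero]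

end Eigenvalues

section Triangularization

variable {K M : Matrix (Fin 2) (Fin 2) R} {a b : R}

theorem mul_eq_upper_mul_fin_two (hK : K.det = 1) (htr : M.trace = a + b)
    (h : K 1 ᵥ* M = b • K 1) : K * M = !![a, (K * M * adjugate K) 0 1; 0, b] * K := by
  have hrow := mul_mul_adjugate_apply_of_vecMul_eq hK h
  have htrN := trace_mul_mul_adjugate (M := M) hK
  rw [htr, trace_fin_two] at htrN
  have h10 : (K * M * adjugate K) 1 0 = 0 := by simpa using congr_fun hrow 0
  have h11 : (K * M * adjugate K) 1 1 = b := by simpa using congr_fun hrow 1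
  conv_lhs => rw [mul_eq_mul_mul_adjugate_mul hK, eta_fin_two (K * M * adjugate K)]
  rw [h10, h11, show (K * M * adjugate K) 0 0 = a by linear_combination htrN - h11]

theorem mul_eq_lower_mul_fin_two (hK : K.det = 1) (htr : M.trace = a + b)
    (h : K 0 ᵥ* M = a • K 0) : K * M = !![a, 0; (K * M * adjugate K) 1 0, b] * K := by
  have hrow := mul_mul_adjugate_apply_of_vecMul_eq hK h
  have htrN := trace_mul_mul_adjugate (M := M) hK
  rw [htr, trace_fin_two] at htrN
  have h00 : (K * M * adjugate K) 0 0 = a := by simpa using congr_fun hrow 0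
  have h01 : (K * M * adjugate K) 0 1 = 0 := by simpa using congr_fun hrow 1
  conv_lhs => rw [mul_eq_mul_mul_adjugate_mul hK, eta_fin_two (K * M * adjugate K)]
  rw [h00, h01, show (K * M * adjugate K) 1 1 = b by linear_combination htrN - h00]

end Triangularization

theorem exists_det_eq_one_vecMul_eq_zero_fin_two {F : Type*} [Field F]
    {A B Q : Matrix (Fin 2) (Fin 2) F} (hAQ : A * Q = 0) (hB : B.det = 0) (hAB : A * B ≠ 0) :
    ∃ K : Matrix (Fin 2) (Fin 2) F, K.det = 1 ∧ K 0 ᵥ* Q = 0 ∧ K 1 ᵥ* B = 0 := by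
  -- the determinant with rows `A i` and `adjugate B k` is `± (A * B) i (1 - k)`
  obtain ⟨i, k, hik⟩ : ∃ i k, A i 0 * adjugate B k 1 - A i 1 * adjugate B k 0 ≠ 0 := by
    by_contra! h
    refine hAB (ext fun i j => ?_)
    have h0 := h i 0
    have h1 := h i 1
    simp only [adjugate_fin_two, of_apply, cons_val', cons_val_one, cons_val_fin_one, cons_val_zero,
      mul_neg, sub_neg_eq_add] at h0 h1
    fin_cases j <;> simp only [Fin.zero_eta, Fin.mk_one, mul_apply, Fin.sum_univ_two, zero_apply]
    · linear_combination h1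
    · linear_combination -h0
  set d := A i 0 * adjugate B k 1 - A i 1 * adjugate B k 0
  refine ⟨of ![d⁻¹ • A i, adjugate B k], ?_, ?_, ?_⟩
  · rw [det_fin_two]
    simp only [of_apply, cons_val_zero, cons_val_one, Pi.smul_apply, smul_eq_mul]
    field_simp
    rfl
  · change (d⁻¹ • A i) ᵥ* Q = 0
    rw [smul_vecMul, ← mul_apply_eq_vecMul, hAQ]
    exact smul_zero _
  · change adjugate B k ᵥ* B = 0
    rw [← mul_apply_eq_vecMul, adjugate_mul, hB, zero_smul]
    rfl

end FinTwo

section SimultaneousTriangularization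

variable {F : Type*} [Field F] {M₀ M₁ : Matrix (Fin 2) (Fin 2) F} {a₀ b₀ a₁ b₁ : F}

theorem sub_smul_one_mul_sub_smul_one_eq_zero_or_fin_two
    (htr₀ : M₀.trace = a₀ + b₀) (hdet₀ : M₀.det = a₀ * b₀)
    (htr₁ : M₁.trace = a₁ + b₁) (hdet₁ : M₁.det = a₁ * b₁)
    (htr : ((M₀ - b₀ • 1) * (M₁ - a₁ • 1)).trace = 0) :
    (M₀ - a₀ • 1) * (M₁ - b₁ • 1) = 0 ∨ (M₀ - b₀ • 1) * (M₁ - a₁ • 1) = 0 := by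
  have htr₀' : M₀.trace = b₀ + a₀ := by rw [htr₀, add_comm]
  have hP := det_sub_smul_one_eq_zero_fin_two htr₀' (by rw [hdet₀, mul_comm])
  rcases mul_eq_zero_or_mul_eq_zero_fin_two hP (det_sub_smul_one_eq_zero_fin_two htr₁ hdet₁) htr
    with hPQ | hQP
  · exact Or.inr hPQ
  · left
    calc (M₀ - a₀ • 1) * (M₁ - b₁ • 1)
        = adjugate (M₀ - b₀ • 1) * adjugate (M₁ - a₁ • 1) := by
          rw [adjugate_sub_smul_one_fin_two htr₀', adjugate_sub_smul_one_fin_two htr₁,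
            neg_mul_neg]
      _ = 0 := by rw [← adjugate_mul_distrib, hQP, adjugate_zero]

theorem exists_triangularization_fin_two
    (htr₀ : M₀.trace = a₀ + b₀) (hdet₀ : M₀.det = a₀ * b₀)
    (htr₁ : M₁.trace = a₁ + b₁) (hdet₁ : M₁.det = a₁ * b₁) (hab₀ : a₀ ≠ b₀) (hab₁ : a₁ ≠ b₁)
    (htr : ((M₀ - b₀ • 1) * (M₁ - a₁ • 1)).trace = 0) :
    ∃ (f₀ f₁ : F) (K : Matrix (Fin 2) (Fin 2) F), K.det = 1 ∧
      K * M₀ = !![a₀, f₀; 0, b₀] * K ∧ K * M₁ = !![a₁, 0; f₁, b₁] * K := by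
  have htr' : ((M₁ - b₁ • 1) * (M₀ - b₀ • 1)).trace = (a₁ - b₁) * (a₀ - b₀) := by
    rw [trace_mul_comm, show M₁ - b₁ • 1 = (M₁ - a₁ • 1) + (a₁ - b₁) • 1 by module,
      Matrix.mul_add, trace_add, htr, Matrix.mul_smul, Matrix.mul_one, trace_smul, trace_sub,
      trace_smul, trace_one, htr₀]
    simp only [Fintype.card_fin, Nat.cast_ofNat, smul_eq_mul, zero_add]
    ring
  have hne : (M₁ - b₁ • 1) * (M₀ - b₀ • 1) ≠ 0 := fun h0 => by
    rw [h0, trace_zero] at htr'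
    exact mul_ne_zero (sub_ne_zero.mpr hab₁) (sub_ne_zero.mpr hab₀) htr'.symm
  obtain ⟨K, hK, hK₀, hK₁⟩ := exists_det_eq_one_vecMul_eq_zero_fin_two
    (sub_smul_one_mul_sub_smul_one_fin_two (by rwa [add_comm]) (by rwa [mul_comm]))
    (det_sub_smul_one_eq_zero_fin_two (by rwa [add_comm]) (by rwa [mul_comm])) hne
  refine ⟨_, _, K, hK, mul_eq_upper_mul_fin_two hK htr₀ ?_, mul_eq_lower_mul_fin_two hK htr₁ ?_⟩
  · simpa [vecMul_sub, vecMul_smul, sub_eq_zero] using hK₁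
  · simpa [vecMul_sub, vecMul_smul, sub_eq_zero] using hK₀

end SimultaneousTriangularization

end Matrix

theorem ne_inv_of_ne_one_of_ne_neg_one {F : Type*} [Field F] {r : F} (h0 : r ≠ 0) (h1 : r ≠ 1)
    (hm : r ≠ -1) : r ≠ r⁻¹ := by
  rw [Ne, ← mul_eq_one_iff_eq_inv₀ h0, mul_self_eq_one_iff, not_or]
  exact ⟨h1, hm⟩

theorem stmt10 (M₀ M₁ : Matrix (Fin 2) (Fin 2) ℂ)
    (hM₀ : M₀.det = 1) (hM₁ : M₁.det = 1)
    (r₀ r₁ : ℂ)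
    (hr₀0 : r₀ ≠ 0) (hr₀1 : r₀ ≠ 1) (hr₀m : r₀ ≠ -1)
    (hr₁0 : r₁ ≠ 0) (hr₁1 : r₁ ≠ 1) (hr₁m : r₁ ≠ -1)
    (htr₀ : M₀.trace = r₀ + r₀⁻¹) (htr₁ : M₁.trace = r₁ + r₁⁻¹)
    (htr : Matrix.trace ((M₀ - r₀⁻¹ • (1 : Matrix (Fin 2) (Fin 2) ℂ)) * (M₁ - r₁ • 1)) = 0) :
    ((M₀ - r₀ • (1 : Matrix (Fin 2) (Fin 2) ℂ)) * (M₁ - r₁⁻¹ • 1) = 0 ∨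
     (M₀ - r₀⁻¹ • (1 : Matrix (Fin 2) (Fin 2) ℂ)) * (M₁ - r₁ • 1) = 0) ∧
    (M₀ * M₁ ≠ M₁ * M₀ →
      ∃ (f₀ f₁ : ℂ) (K : Matrix (Fin 2) (Fin 2) ℂ), K.det = 1 ∧
        K * M₀ = !![r₀, f₀; 0, r₀⁻¹] * K ∧
        K * M₁ = !![r₁, 0; f₁, r₁⁻¹] * K) := by
  have hdet₀ : M₀.det = r₀ * r₀⁻¹ := by rw [hM₀, mul_inv_cancel₀ hr₀0]
  have hdet₁ : M₁.det = r₁ * r₁⁻¹ := by rw [hM₁, mul_inv_cancel₀ hr₁0]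
  exact ⟨sub_smul_one_mul_sub_smul_one_eq_zero_or_fin_two htr₀ hdet₀ htr₁ hdet₁ htr,
    fun _ => exists_triangularization_fin_two htr₀ hdet₀ htr₁ hdet₁
      (ne_inv_of_ne_one_of_ne_neg_one hr₀0 hr₀1 hr₀m)
      (ne_inv_of_ne_one_of_ne_neg_one hr₁0 hr₁1 hr₁m) htr⟩
end

section
/- If tr((M₀ − r₀⁻¹)(M₁ − r₁⁻¹)) = 0, then (M₀ − r₀)(M₁ − r₁) = 0 or (M₀ − r₀⁻¹)(M₁ − r₁⁻¹) = 0. -/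
open Matrix Complex

-- universal 2x2 identities
lemma ch2 (X : Matrix (Fin 2) (Fin 2) ℂ) : X * X = X.trace • X - X.det • 1 := by
  ext i j
  fin_cases i <;> fin_cases j <;>
    simp [Matrix.mul_apply, Matrix.trace_fin_two, Matrix.det_fin_two, Fin.sum_univ_two,
      Matrix.one_apply] <;> ring

lemma anticomm2 (X Y : Matrix (Fin 2) (Fin 2) ℂ) :
    X * Y + Y * X = X.trace • Y + Y.trace • X + (Matrix.trace (X * Y) - X.trace * Y.trace) • 1 := by
  ext i j
  fin_cases i <;> fin_cases j <;>
    simp [Matrix.mul_apply, Matrix.trace_fin_two, Fin.sum_univ_two, Matrix.one_apply] <;> ring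

lemma rank_one_decomp (p : Matrix (Fin 2) (Fin 2) ℂ) (h : p.det = 0) :
    ∃ u v : Fin 2 → ℂ, ∀ i j, p i j = u i * v j := by
  rw [Matrix.det_fin_two] at h
  by_cases ha : p 0 0 ≠ 0
  · refine ⟨![p 0 0, p 1 0], ![1, p 0 1 / p 0 0], fun i j => ?_⟩
    fin_cases i <;> fin_cases j <;> simp
    · field_simp
    · field_simp
      linear_combination h
  · push_neg at ha
    by_cases hb : p 0 1 = 0
    · exact ⟨![0, 1], ![p 1 0, p 1 1], fun i j => by
        fin_cases i <;> fin_cases j <;> simp [ha, hb]⟩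
    · have hc : p 1 0 = 0 := by
        rw [ha, zero_mul] at h
        rcases mul_eq_zero.mp (by linear_combination -h : p 0 1 * p 1 0 = 0) with h' | h'
        · exact absurd h' hb
        · exact h'
      exact ⟨![p 0 1, p 1 1], ![0, 1], fun i j => by
        fin_cases i <;> fin_cases j <;> simp [ha, hc]⟩

lemma expand2 (p q : Matrix (Fin 2) (Fin 2) ℂ) (s t : ℂ) :
    (p - s • 1) * (q - t • 1) = p * q - t • p - s • q + (s * t) • 1 := by
  simp only [sub_mul, mul_sub, Matrix.smul_mul, Matrix.mul_smul, one_mul, mul_one, smul_smul]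
  module

lemma key_lemma (p q : Matrix (Fin 2) (Fin 2) ℂ) (hdet : p.det = 0)
    (h : q * p * q = 0) : p * q = 0 ∨ q * p = 0 := by
  obtain ⟨u, v, huv⟩ := rank_one_decomp p hdet
  have hxy : ∀ i j : Fin 2, (q i 0 * u 0 + q i 1 * u 1) * (v 0 * q 0 j + v 1 * q 1 j) = 0 := by
    intro i j
    have h' : (q * p * q) i j = 0 := by rw [h]; rfl
    simp only [Matrix.mul_apply, Fin.sum_univ_two, huv] at h'
    linear_combination h'
  by_cases hx : ∀ i, q i 0 * u 0 + q i 1 * u 1 = 0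
  · right
    ext i j
    have e : (q * p) i j = (q i 0 * u 0 + q i 1 * u 1) * v j := by
      simp only [Matrix.mul_apply, Fin.sum_univ_two, huv]; ring
    rw [e, hx i, zero_mul]; simp
  · left
    push_neg at hx
    obtain ⟨i0, hi0⟩ := hx
    have hy : ∀ j, v 0 * q 0 j + v 1 * q 1 j = 0 := fun j =>
      (mul_eq_zero.mp (hxy i0 j)).resolve_left hi0
    ext i j
    have e : (p * q) i j = u i * (v 0 * q 0 j + v 1 * q 1 j) := by
      simp only [Matrix.mul_apply, Fin.sum_univ_two, huv]; ring
    rw [e, hy j, mul_zero]; simp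

theorem stmt11 (M₀ M₁ : Matrix (Fin 2) (Fin 2) ℂ)
    (hM₀ : M₀.det = 1) (hM₁ : M₁.det = 1)
    (r₀ r₁ : ℂ)
    (hr₀0 : r₀ ≠ 0) (hr₀1 : r₀ ≠ 1) (hr₀m : r₀ ≠ -1)
    (hr₁0 : r₁ ≠ 0) (hr₁1 : r₁ ≠ 1) (hr₁m : r₁ ≠ -1)
    (htr₀ : M₀.trace = r₀ + r₀⁻¹) (htr₁ : M₁.trace = r₁ + r₁⁻¹)
    (htr : Matrix.trace ((M₀ - r₀⁻¹ • (1 : Matrix (Fin 2) (Fin 2) ℂ)) * (M₁ - r₁⁻¹ • 1)) = 0) :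
    (M₀ - r₀ • (1 : Matrix (Fin 2) (Fin 2) ℂ)) * (M₁ - r₁ • 1) = 0 ∨
    (M₀ - r₀⁻¹ • (1 : Matrix (Fin 2) (Fin 2) ℂ)) * (M₁ - r₁⁻¹ • 1) = 0 := by
  have hR : r₀ * r₀⁻¹ = 1 := mul_inv_cancel₀ hr₀0
  have hU : r₁ * r₁⁻¹ = 1 := mul_inv_cancel₀ hr₁0
  set p : Matrix (Fin 2) (Fin 2) ℂ := M₀ - r₀⁻¹ • 1 with hp
  set q : Matrix (Fin 2) (Fin 2) ℂ := M₁ - r₁⁻¹ • 1 with hq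
  -- traces and dets of p, q
  have htrp : p.trace = r₀ - r₀⁻¹ := by
    simp [hp, Matrix.trace_sub, Matrix.trace_smul, Matrix.trace_one, htr₀]
    ring
  have htrq : q.trace = r₁ - r₁⁻¹ := by
    simp [hq, Matrix.trace_sub, Matrix.trace_smul, Matrix.trace_one, htr₁]
    ring
  have hdetp : p.det = 0 := by
    rw [Matrix.det_fin_two] at hM₀ ⊢
    rw [Matrix.trace_fin_two] at htr₀
    simp only [hp, Matrix.sub_apply, Matrix.smul_apply, Matrix.one_apply, if_pos rfl]
    norm_num
    linear_combination hM₀ - r₀⁻¹ * htr₀ - hR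
  have hdetq : q.det = 0 := by
    rw [Matrix.det_fin_two] at hM₁ ⊢
    rw [Matrix.trace_fin_two] at htr₁
    simp only [hq, Matrix.sub_apply, Matrix.smul_apply, Matrix.one_apply, if_pos rfl]
    norm_num
    linear_combination hM₁ - r₁⁻¹ * htr₁ - hU
  have hq2 : q * q = (r₁ - r₁⁻¹) • q := by
    rw [ch2 q, htrq, hdetq, zero_smul, sub_zero]
  have hM3 : p * q + q * p
      = (r₁ - r₁⁻¹) • p + (r₀ - r₀⁻¹) • q - ((r₀ - r₀⁻¹) * (r₁ - r₁⁻¹)) • 1 := by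
    rw [anticomm2 p q, htrp, htrq, htr]
    module
  have hpq : p * q
      = (r₁ - r₁⁻¹) • p + (r₀ - r₀⁻¹) • q - ((r₀ - r₀⁻¹) * (r₁ - r₁⁻¹)) • 1 - q * p := by
    rw [← hM3]; abel
  have hqpq : q * p * q = 0 := by
    rw [mul_assoc, hpq]
    simp only [mul_sub, mul_add, Matrix.mul_smul, mul_one, ← mul_assoc, hq2,
      Matrix.smul_mul, smul_smul]
    module
  have hPQ : (M₀ - r₀ • (1 : Matrix (Fin 2) (Fin 2) ℂ)) * (M₁ - r₁ • 1) = -(q * p) := by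
    have hp' : M₀ - r₀ • (1 : Matrix (Fin 2) (Fin 2) ℂ) = p - (r₀ - r₀⁻¹) • 1 := by
      rw [hp]; module
    have hq' : M₁ - r₁ • (1 : Matrix (Fin 2) (Fin 2) ℂ) = q - (r₁ - r₁⁻¹) • 1 := by
      rw [hq]; module
    rw [hp', hq', expand2, hpq]
    module
  rcases key_lemma p q hdetp hqpq with h | h
  · right; exact h
  · left; rw [hPQ, h, neg_zero]
end

section
/- Suppose M₀M₁ ≠ M₁M₀ and (M₀ − r₀⁻¹)(M₁ − r₁⁻¹) = 0. Then: (i) every solution (K, f₀, f₁) of the simultaneous triangularization problem satisfies f₀·f₁ = −(r₀ − r₀⁻¹)(r₁ − r₁⁻¹) (in particular f₀ ≠ 0 and f₁ ≠ 0); and (ii) for every pair (f₀, f₁) ∈ ℂ² with f₀·f₁ = −(r₀ − r₀⁻¹)(r₁ − r₁⁻¹) there exists K ∈ SL(2,ℂ) with K·M₀ = M₀Δ·K and K·M₁ = M₁Δ·K. -/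
/-!
Write `P₀ = M₀ - r₀⁻¹` and `P₁ = M₁ - r₁⁻¹`. Conjugating `P₀ * P₁ = 0` by `K` gives
`(M₀Δ - r₀⁻¹) * (M₁Δ - r₁⁻¹) = 0`, whose top-left entry is
`(r₀ - r₀⁻¹) * (r₁ - r₁⁻¹) + f₀ * f₁`.

Conversely, since `P₀ * P₁ = 0` the commutator of `M₀` and `M₁` is `-P₁ * P₀`, so some row `u`
of `P₁` has `w = u * P₀ ≠ 0`. By Cayley–Hamilton `u` is a left eigenvector of `M₁` for `r₁`, and
since `w * P₁ = 0`, `w` is one for `r₁⁻¹`, so they are independent. In the basis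
`u, v = u * (M₀ - r₀)` both matrices are triangular of the required shape, with `f₀ = 1`;
conjugating by a diagonal matrix rescales `(f₀, f₁)` to `(s² f₀, s⁻² f₁)`, and a square root
normalizes the determinant.
-/

open Matrix

namespace Matrix

variable {F : Type*} [Field F]

theorem sub_inv_smul_one_mul_self {M : Matrix (Fin 2) (Fin 2) F} {r : F} (hr : r ≠ 0)
    (hdet : M.det = 1) (htr : M.trace = r + r⁻¹) :
    (M - r⁻¹ • 1) * M = r • (M - r⁻¹ • 1) := by
  have hCH := M.aeval_self_charpoly
  simp only [charpoly_fin_two, hdet, htr, map_add, map_sub, map_mul, map_pow, Polynomial.aeval_X,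
    Polynomial.aeval_C, Algebra.algebraMap_eq_smul_one, map_one, add_mul, smul_mul_assoc,
    one_mul] at hCH
  rw [sub_mul, smul_mul_assoc, one_mul, smul_sub, smul_smul, mul_inv_cancel₀ hr, ← sq,
    ← sub_eq_zero, ← hCH]
  module

theorem smul_eq_smul_of_det_eq_zero {u w : Fin 2 → F} (h : (of ![u, w]).det = 0) (k : Fin 2) :
    u k • w = w k • u := by
  simp only [det_fin_two, of_apply, cons_val_zero, cons_val_one] at h
  suffices ∀ k l, u k * w l = w k * u l from funext fun l ↦ this k l
  simp only [Fin.forall_fin_two]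
  exact ⟨⟨by ring, by linear_combination h⟩, by linear_combination -h, by ring⟩

theorem det_of_ne_zero_of_vecMul_eq_smul {u w : Fin 2 → F} {N : Matrix (Fin 2) (Fin 2) F}
    {a b : F} (hu : u ≠ 0) (hw : w ≠ 0) (hua : u ᵥ* N = a • u) (hwb : w ᵥ* N = b • w)
    (hab : a ≠ b) : (of ![u, w]).det ≠ 0 := by
  intro h
  refine hu (funext fun k ↦ ?_)
  have hk := smul_eq_smul_of_det_eq_zero h k
  have hkN : (u k * b) • w = (w k * a) • u := by
    simpa only [smul_vecMul, hua, hwb, smul_smul] using congrArg (· ᵥ* N) hk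
  have : (u k * (b - a)) • w = 0 :=
    calc (u k * (b - a)) • w = (u k * b) • w - a • u k • w := by module
      _ = 0 := by rw [hkN, hk]; module
  simpa [hw, sub_eq_zero, hab.symm] using this

theorem of_mul_eq_mul_of {u v : Fin 2 → F} {M : Matrix (Fin 2) (Fin 2) F} {p q s t : F}
    (hu : u ᵥ* M = p • u + q • v) (hv : v ᵥ* M = s • u + t • v) :
    of ![u, v] * M = !![p, q; s, t] * of ![u, v] := by
  funext i
  fin_cases i
  · exact hu.trans (by ext; simp)
  · exact hv.trans (by ext; simp)

theorem diag_mul_fin_two {a b p q s t q' s' : F} (hq : a * q = q' * b) (hs : b * s = s' * a) :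
    !![a, 0; 0, b] * !![p, q; s, t] = !![p, q'; s', t] * !![a, 0; 0, b] := by
  simp [hq, hs, mul_comm]

end Matrix

section Triangularization

variable {F : Type*} [Field F] {M₀ M₁ : Matrix (Fin 2) (Fin 2) F} {r₀ r₁ : F}

theorem sub_inv_ne_zero {r : F} (h0 : r ≠ 0) (h1 : r ≠ 1) (hm : r ≠ -1) : r - r⁻¹ ≠ 0 := by
  intro h
  refine (mul_self_eq_one_iff.mp ?_).elim h1 hm
  rw [sub_eq_zero] at h
  nth_rw 2 [h]
  exact mul_inv_cancel₀ h0

theorem mul_eq_of_triangularizes {K : Matrix (Fin 2) (Fin 2) F} {f₀ f₁ : F} (hK : IsUnit K)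
    (h₀ : K * M₀ = !![r₀, f₀; 0, r₀⁻¹] * K) (h₁ : K * M₁ = !![r₁, 0; f₁, r₁⁻¹] * K)
    (h : (M₀ - r₀⁻¹ • 1) * (M₁ - r₁⁻¹ • 1) = 0) :
    f₀ * f₁ = -((r₀ - r₀⁻¹) * (r₁ - r₁⁻¹)) := by
  have hconj : SemiconjBy K ((M₀ - r₀⁻¹ • 1) * (M₁ - r₁⁻¹ • 1))
      ((!![r₀, f₀; 0, r₀⁻¹] - r₀⁻¹ • 1) * (!![r₁, 0; f₁, r₁⁻¹] - r₁⁻¹ • 1)) :=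
    (SemiconjBy.sub_right h₀ ((Commute.one_right K).smul_right _)).mul_right
      (SemiconjBy.sub_right h₁ ((Commute.one_right K).smul_right _))
  rw [h, SemiconjBy, mul_zero, eq_comm, hK.mul_left_eq_zero] at hconj
  have h00 : (r₀ - r₀⁻¹) * (r₁ - r₁⁻¹) + f₀ * f₁ = 0 := by
    simpa [mul_apply, Fin.sum_univ_two] using congrFun (congrFun hconj 0) 0
  linear_combination h00

theorem exists_triangularizing_basis (hr₀ : r₀ ≠ 0) (hr₁ : r₁ ≠ 0) (hr₁' : r₁ - r₁⁻¹ ≠ 0)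
    (hM₀ : M₀.det = 1) (hM₁ : M₁.det = 1)
    (htr₀ : M₀.trace = r₀ + r₀⁻¹) (htr₁ : M₁.trace = r₁ + r₁⁻¹)
    (hcomm : M₀ * M₁ ≠ M₁ * M₀) (h : (M₀ - r₀⁻¹ • 1) * (M₁ - r₁⁻¹ • 1) = 0) :
    ∃ K : Matrix (Fin 2) (Fin 2) F, K.det ≠ 0 ∧
      K * M₀ = !![r₀, 1; 0, r₀⁻¹] * K ∧
      K * M₁ = !![r₁, 0; -((r₀ - r₀⁻¹) * (r₁ - r₁⁻¹)), r₁⁻¹] * K := by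
  set P₀ := M₀ - r₀⁻¹ • 1
  set P₁ := M₁ - r₁⁻¹ • 1
  have hP : P₁ * P₀ ≠ 0 := fun h' ↦ hcomm <| Commute.eq <| by
    have : Commute P₀ P₁ := h.trans h'.symm
    simpa [P₀, P₁] using (this.add_left ((Commute.one_left _).smul_left r₀⁻¹)).add_right
      ((Commute.one_right _).smul_right r₁⁻¹)
  obtain ⟨i, hw⟩ : ∃ i, P₁ i ᵥ* P₀ ≠ 0 := Function.ne_iff.mp hP
  set u := P₁ i
  set w := u ᵥ* P₀
  have hu₁ : u ᵥ* M₁ = r₁ • u := by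
    rw [← mul_apply_eq_vecMul, sub_inv_smul_one_mul_self hr₁ hM₁ htr₁]; rfl
  have hwP₁ : w ᵥ* P₁ = 0 := by rw [vecMul_vecMul, h, vecMul_zero]
  have hw₁ : w ᵥ* M₁ = r₁⁻¹ • w := by
    simpa [P₁, vecMul_sub, vecMul_smul, sub_eq_zero] using hwP₁
  have hdet : (of ![u, w]).det ≠ 0 := by
    refine det_of_ne_zero_of_vecMul_eq_smul (fun hu ↦ hw (by simp [w, hu])) hw
      (a := r₁ - r₁⁻¹) ?_ (hwP₁.trans (zero_smul F w).symm) hr₁'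
    simp [P₁, vecMul_sub, vecMul_smul, hu₁, sub_smul]
  set v := u ᵥ* (M₀ - r₀ • 1)
  have hv : v = w + (r₀⁻¹ - r₀) • u := by
    simp [v, w, P₀, vecMul_sub, vecMul_smul, sub_smul]
  refine ⟨of ![u, v], ?_, of_mul_eq_mul_of ?_ ?_, of_mul_eq_mul_of ?_ ?_⟩
  · convert hdet using 1
    simp only [hv, det_fin_two, of_apply, cons_val_zero, cons_val_one, Pi.add_apply,
      Pi.smul_apply, smul_eq_mul]
    ring
  · simp [v, vecMul_sub, vecMul_smul]
  · have := sub_inv_smul_one_mul_self (inv_ne_zero hr₀) hM₀ (by rwa [inv_inv, add_comm])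
    rw [inv_inv] at this
    simp [v, vecMul_vecMul, this, vecMul_smul]
  · simp [hu₁]
  · rw [hv, add_vecMul, hw₁, smul_vecMul, hu₁]
    module

theorem exists_triangularizing_of_mul_eq [IsAlgClosed F] {K₁ : Matrix (Fin 2) (Fin 2) F}
    {g f₀ f₁ : F} (hK₁ : K₁.det ≠ 0) (h₀ : K₁ * M₀ = !![r₀, 1; 0, r₀⁻¹] * K₁)
    (h₁ : K₁ * M₁ = !![r₁, 0; g, r₁⁻¹] * K₁) (hf₀ : f₀ ≠ 0) (hf : f₀ * f₁ = g) :
    ∃ K : Matrix (Fin 2) (Fin 2) F, K.det = 1 ∧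
      K * M₀ = !![r₀, f₀; 0, r₀⁻¹] * K ∧ K * M₁ = !![r₁, 0; f₁, r₁⁻¹] * K := by
  obtain ⟨b, hb⟩ := IsAlgClosed.exists_eq_mul_self (f₀ * K₁.det)⁻¹
  refine ⟨!![f₀ * b, 0; 0, b] * K₁, ?_, ?_, ?_⟩
  · rw [det_mul, det_fin_two_of]
    field_simp at hb
    linear_combination -hb
  · rw [mul_assoc, h₀, ← mul_assoc, diag_mul_fin_two (q' := f₀) (s' := 0) (by ring) (by ring),
      mul_assoc]
  · rw [mul_assoc, h₁, ← mul_assoc,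
      diag_mul_fin_two (q' := 0) (s' := f₁) (by ring) (by rw [← hf]; ring), mul_assoc]

end Triangularization

theorem stmt12 (M₀ M₁ : Matrix (Fin 2) (Fin 2) ℂ)
    (hM₀ : M₀.det = 1) (hM₁ : M₁.det = 1)
    (r₀ r₁ : ℂ)
    (hr₀0 : r₀ ≠ 0) (hr₀1 : r₀ ≠ 1) (hr₀m : r₀ ≠ -1)
    (hr₁0 : r₁ ≠ 0) (hr₁1 : r₁ ≠ 1) (hr₁m : r₁ ≠ -1)
    (htr₀ : M₀.trace = r₀ + r₀⁻¹) (htr₁ : M₁.trace = r₁ + r₁⁻¹)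
    (hcomm : M₀ * M₁ ≠ M₁ * M₀)
    (h : (M₀ - r₀⁻¹ • (1 : Matrix (Fin 2) (Fin 2) ℂ)) * (M₁ - r₁⁻¹ • 1) = 0) :
    (∀ (K : Matrix (Fin 2) (Fin 2) ℂ) (f₀ f₁ : ℂ), K.det = 1 →
      K * M₀ = !![r₀, f₀; 0, r₀⁻¹] * K →
      K * M₁ = !![r₁, 0; f₁, r₁⁻¹] * K →
      f₀ * f₁ = -((r₀ - r₀⁻¹) * (r₁ - r₁⁻¹))) ∧
    (∀ f₀ f₁ : ℂ, f₀ * f₁ = -((r₀ - r₀⁻¹) * (r₁ - r₁⁻¹)) →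
      ∃ K : Matrix (Fin 2) (Fin 2) ℂ, K.det = 1 ∧
        K * M₀ = !![r₀, f₀; 0, r₀⁻¹] * K ∧
        K * M₁ = !![r₁, 0; f₁, r₁⁻¹] * K) := by
  refine ⟨fun K f₀ f₁ hK h₀ h₁ ↦ ?_, fun f₀ f₁ hf ↦ ?_⟩
  · exact mul_eq_of_triangularizes ((isUnit_iff_isUnit_det K).mpr (hK ▸ isUnit_one)) h₀ h₁ h
  · have hr₁ := sub_inv_ne_zero hr₁0 hr₁1 hr₁m
    obtain ⟨K₁, hK₁, h₀, h₁⟩ :=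
      exists_triangularizing_basis hr₀0 hr₁0 hr₁ hM₀ hM₁ htr₀ htr₁ hcomm h
    have hf₀ : f₀ ≠ 0 := left_ne_zero_of_mul <| hf ▸
      neg_ne_zero.mpr (mul_ne_zero (sub_inv_ne_zero hr₀0 hr₀1 hr₀m) hr₁)
    exact exists_triangularizing_of_mul_eq hK₁ h₀ h₁ hf₀ hf
end

section
/- Suppose tr((M₀ − r₀⁻¹)(M₁ − r₁)) ≠ 0 and tr((M₀ − r₀⁻¹)(M₁ − r₁⁻¹)) ≠ 0. Then: (i) every solution (K, f₀, f₁) of the simultaneous triangularization problem satisfies f₀·f₁ = tr((M₁ − r₁)(M₀ − r₀⁻¹)), and this number is nonzero; (ii) for every pair (f₀, f₁) ∈ ℂ² with f₀·f₁ = tr((M₁ − r₁)(M₀ − r₀⁻¹)) there exists K ∈ SL(2,ℂ) with K·M₀ = M₀Δ·K and K·M₁ = M₁Δ·K, and for fixed such (f₀, f₁) there are exactly two solutions K, differing only by sign. -/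
open Matrix Complex


lemma wedge_zero (α β γ δ x₁ x₂ y₁ y₂ : ℂ)
    (h1 : x₁*α + x₂*γ = 0) (h2 : x₁*β + x₂*δ = 0)
    (h3 : y₁*α + y₂*γ = 0) (h4 : y₁*β + y₂*δ = 0)
    (htr : α + δ ≠ 0) : x₁*y₂ - x₂*y₁ = 0 := by
  have h : (α+δ)*(x₁*y₂ - x₂*y₁) = 0 := by
    linear_combination y₂*h1 - x₂*h3 + x₁*h4 - y₁*h2
  rcases mul_eq_zero.1 h with h | h
  · exact absurd h htr
  · exact h

lemma prop_of_wedge (x₁ x₂ y₁ y₂ : ℂ) (hw : x₁*y₂ - x₂*y₁ = 0)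
    (hy : ¬(y₁ = 0 ∧ y₂ = 0)) : ∃ μ, x₁ = μ*y₁ ∧ x₂ = μ*y₂ := by
  by_cases h1 : y₁ = 0
  · have h2 : y₂ ≠ 0 := fun h => hy ⟨h1, h⟩
    refine ⟨x₂/y₂, ?_, by field_simp⟩
    subst h1
    have : x₁ * y₂ = 0 := by linear_combination hw
    rcases mul_eq_zero.1 this with h | h
    · simp [h]
    · exact absurd h h2
  · refine ⟨x₁/y₁, by field_simp, ?_⟩
    field_simp
    linear_combination -hw

lemma common_kernel_trace (u₁ u₂ B₀₀ B₀₁ B₁₀ B₁₁ D₀₀ D₀₁ D₁₀ D₁₁ : ℂ)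
    (hu : ¬(u₁ = 0 ∧ u₂ = 0))
    (hB1 : u₁*B₀₀ + u₂*B₁₀ = 0) (hB2 : u₁*B₀₁ + u₂*B₁₁ = 0)
    (hD1 : u₁*D₀₀ + u₂*D₁₀ = 0) (hD2 : u₁*D₀₁ + u₂*D₁₁ = 0) :
    B₀₀*D₀₀ + B₀₁*D₁₀ + B₁₀*D₀₁ + B₁₁*D₁₁ = (B₀₀+B₁₁)*(D₀₀+D₁₁) := by
  by_cases h2 : u₂ = 0
  · have h1 : u₁ ≠ 0 := fun h => hu ⟨h, h2⟩
    subst h2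
    have eB1 : B₀₀ = 0 := by
      rcases mul_eq_zero.1 (show u₁ * B₀₀ = 0 by linear_combination hB1) with h | h
      exacts [absurd h h1, h]
    have eB2 : B₀₁ = 0 := by
      rcases mul_eq_zero.1 (show u₁ * B₀₁ = 0 by linear_combination hB2) with h | h
      exacts [absurd h h1, h]
    have eD1 : D₀₀ = 0 := by
      rcases mul_eq_zero.1 (show u₁ * D₀₀ = 0 by linear_combination hD1) with h | h
      exacts [absurd h h1, h]
    have eD2 : D₀₁ = 0 := by
      rcases mul_eq_zero.1 (show u₁ * D₀₁ = 0 by linear_combination hD2) with h | h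
      exacts [absurd h h1, h]
    rw [eB1, eB2, eD1, eD2]; ring
  · have hB10 : B₁₀ = -(u₁*B₀₀)/u₂ := by field_simp; linear_combination hB1
    have hB11 : B₁₁ = -(u₁*B₀₁)/u₂ := by field_simp; linear_combination hB2
    have hD10 : D₁₀ = -(u₁*D₀₀)/u₂ := by field_simp; linear_combination hD1
    have hD11 : D₁₁ = -(u₁*D₀₁)/u₂ := by field_simp; linear_combination hD2
    rw [hB10, hB11, hD10, hD11]
    field_simp
    ring

lemma exists_k (r₀ r₁ a b c d p q s t f₀ f₁ : ℂ)
    (hr₀0 : r₀ ≠ 0) (hr₁0 : r₁ ≠ 0)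
    (hs₀ : r₀ - r₀⁻¹ ≠ 0) (hs₁ : r₁ - r₁⁻¹ ≠ 0)
    (h1 : a*d - b*c = 1) (h2 : a + d = r₀ + r₀⁻¹)
    (h3 : p*t - q*s = 1) (h4 : p + t = r₁ + r₁⁻¹)
    (hσ : (a - r₀⁻¹)*(p - r₁⁻¹) + b*s + c*q + (d - r₀⁻¹)*(t - r₁⁻¹) ≠ 0)
    (hτ : f₀ * f₁ = (a - r₀⁻¹)*(p - r₁) + b*s + c*q + (d - r₀⁻¹)*(t - r₁))
    (hτ0 : f₀ * f₁ ≠ 0) :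
    ∃ k₁ k₂ k₃ k₄ : ℂ,
      k₁*k₄ - k₂*k₃ = 1 ∧
      k₁*a + k₂*c = r₀*k₁ + f₀*k₃ ∧
      k₁*b + k₂*d = r₀*k₂ + f₀*k₄ ∧
      k₃*a + k₄*c = r₀⁻¹*k₃ ∧
      k₃*b + k₄*d = r₀⁻¹*k₄ ∧
      k₁*p + k₂*s = r₁*k₁ ∧
      k₁*q + k₂*t = r₁*k₂ ∧
      k₃*p + k₄*s = f₁*k₁ + r₁⁻¹*k₃ ∧
      k₃*q + k₄*t = f₁*k₂ + r₁⁻¹*k₄ := by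
  have hi₀ : r₀ * r₀⁻¹ = 1 := mul_inv_cancel₀ hr₀0
  have hi₁ : r₁ * r₁⁻¹ = 1 := mul_inv_cancel₀ hr₁0
  -- Cayley–Hamilton style identities
  have hDA00 : (a-r₀)*(a-r₀⁻¹) + b*c = 0 := by linear_combination hi₀ + a*h2 - h1
  have hDA01 : (a-r₀)*b + b*(d-r₀⁻¹) = 0 := by linear_combination b*h2
  have hDA10 : c*(a-r₀⁻¹) + (d-r₀)*c = 0 := by linear_combination c*h2
  have hDA11 : c*b + (d-r₀)*(d-r₀⁻¹) = 0 := by linear_combination hi₀ + d*h2 - h1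
  have hCB00 : (p-r₁⁻¹)*(p-r₁) + q*s = 0 := by linear_combination hi₁ + p*h4 - h3
  have hCB01 : (p-r₁⁻¹)*q + q*(t-r₁) = 0 := by linear_combination q*h4
  have hCB10 : s*(p-r₁) + (t-r₁⁻¹)*s = 0 := by linear_combination s*h4
  have hCB11 : s*q + (t-r₁⁻¹)*(t-r₁) = 0 := by linear_combination hi₁ + t*h4 - h3
  -- choose u : left kernel of M₁ - r₁ (a row of M₁ - r₁⁻¹)
  obtain ⟨u₁, u₂, hu, huB1, huB2⟩ :
      ∃ u₁ u₂, ¬(u₁ = 0 ∧ u₂ = 0) ∧ u₁*(p-r₁) + u₂*s = 0 ∧ u₁*q + u₂*(t-r₁) = 0 := by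
    by_cases hc : p - r₁⁻¹ = 0 ∧ q = 0
    · refine ⟨s, t - r₁⁻¹, ?_, ?_, ?_⟩
      · rintro ⟨-, e2⟩
        exact hs₁ (by linear_combination hc.1 + e2 - h4)
      · linear_combination hCB10
      · linear_combination hCB11
    · exact ⟨p - r₁⁻¹, q, hc, hCB00, hCB01⟩
  -- choose v : left kernel of M₀ - r₀⁻¹ (a row of M₀ - r₀)
  obtain ⟨v₁, v₂, hv, hvA1, hvA2⟩ :
      ∃ v₁ v₂, ¬(v₁ = 0 ∧ v₂ = 0) ∧ v₁*(a-r₀⁻¹) + v₂*c = 0 ∧ v₁*b + v₂*(d-r₀⁻¹) = 0 := by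
    by_cases hc : a - r₀ = 0 ∧ b = 0
    · refine ⟨c, d - r₀, ?_, ?_, ?_⟩
      · rintro ⟨-, e2⟩
        exact hs₀ (by linear_combination h2 - hc.1 - e2)
      · linear_combination hDA10
      · linear_combination hDA11
    · exact ⟨a - r₀, b, hc, hDA00, hDA01⟩
  -- δ = u ∧ v ≠ 0
  have hδ : u₁*v₂ - u₂*v₁ ≠ 0 := by
    intro hw
    obtain ⟨γ, hγ1, hγ2⟩ := prop_of_wedge u₁ u₂ v₁ v₂ hw hv
    have hγ0 : γ ≠ 0 := by
      rintro rfl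
      exact hu ⟨by linear_combination hγ1, by linear_combination hγ2⟩
    have hvB1 : v₁*(p-r₁) + v₂*s = 0 := by
      have h : γ * (v₁*(p-r₁) + v₂*s) = 0 := by
        linear_combination huB1 - (p-r₁)*hγ1 - s*hγ2
      rcases mul_eq_zero.1 h with h | h
      exacts [absurd h hγ0, h]
    have hvB2 : v₁*q + v₂*(t-r₁) = 0 := by
      have h : γ * (v₁*q + v₂*(t-r₁)) = 0 := by
        linear_combination huB2 - q*hγ1 - (t-r₁)*hγ2
      rcases mul_eq_zero.1 h with h | h
      exacts [absurd h hγ0, h]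
    have hAB := common_kernel_trace v₁ v₂ (a-r₀⁻¹) b c (d-r₀⁻¹) (p-r₁) q s (t-r₁)
      hv hvA1 hvA2 hvB1 hvB2
    exact hσ (by linear_combination hAB + (a + d - 2*r₀⁻¹)*h4)
  -- uD = λ • v
  have hwA1 : (u₁*(a-r₀)+u₂*c)*(a-r₀⁻¹) + (u₁*b+u₂*(d-r₀))*c = 0 := by
    linear_combination u₁*hDA00 + u₂*hDA10
  have hwA2 : (u₁*(a-r₀)+u₂*c)*b + (u₁*b+u₂*(d-r₀))*(d-r₀⁻¹) = 0 := by
    linear_combination u₁*hDA01 + u₂*hDA11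
  have htrA : (a-r₀⁻¹) + (d-r₀⁻¹) ≠ 0 := by
    intro h; exact hs₀ (by linear_combination h - h2)
  have htrB : (p-r₁) + (t-r₁) ≠ 0 := by
    intro h; exact hs₁ (by linear_combination h4 - h)
  obtain ⟨lam, hl1, hl2⟩ := prop_of_wedge (u₁*(a-r₀)+u₂*c) (u₁*b+u₂*(d-r₀)) v₁ v₂
    (wedge_zero (a-r₀⁻¹) b c (d-r₀⁻¹) _ _ _ _ hwA1 hwA2 hvA1 hvA2 htrA) hv
  -- vC = μ • u
  have hzB1 : (v₁*(p-r₁⁻¹)+v₂*s)*(p-r₁) + (v₁*q+v₂*(t-r₁⁻¹))*s = 0 := by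
    linear_combination v₁*hCB00 + v₂*hCB10
  have hzB2 : (v₁*(p-r₁⁻¹)+v₂*s)*q + (v₁*q+v₂*(t-r₁⁻¹))*(t-r₁) = 0 := by
    linear_combination v₁*hCB01 + v₂*hCB11
  obtain ⟨mu, hm1, hm2⟩ := prop_of_wedge (v₁*(p-r₁⁻¹)+v₂*s) (v₁*q+v₂*(t-r₁⁻¹)) u₁ u₂
    (wedge_zero (p-r₁) q s (t-r₁) _ _ _ _ hzB1 hzB2 huB1 huB2 htrB) hu
  -- vD = (r₀⁻¹ - r₀) • v
  have hvD1 : v₁*(a-r₀) + v₂*c = (r₀⁻¹-r₀)*v₁ := by linear_combination hvA1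
  have hvD2 : v₁*b + v₂*(d-r₀) = (r₀⁻¹-r₀)*v₂ := by linear_combination hvA2
  -- u(DC) = lam*mu • u
  have hg₁ : (u₁*(a-r₀)+u₂*c)*(p-r₁⁻¹) + (u₁*b+u₂*(d-r₀))*s = lam*(mu*u₁) := by
    linear_combination (p-r₁⁻¹)*hl1 + s*hl2 + lam*hm1
  have hg₂ : (u₁*(a-r₀)+u₂*c)*q + (u₁*b+u₂*(d-r₀))*(t-r₁⁻¹) = lam*(mu*u₂) := by
    linear_combination q*hl1 + (t-r₁⁻¹)*hl2 + lam*hm2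
  -- v(DC) = (r₀⁻¹-r₀)*mu • u
  have hvdc₁ : (v₁*(a-r₀)+v₂*c)*(p-r₁⁻¹) + (v₁*b+v₂*(d-r₀))*s = (r₀⁻¹-r₀)*(mu*u₁) := by
    linear_combination (p-r₁⁻¹)*hvD1 + s*hvD2 + (r₀⁻¹-r₀)*hm1
  have hvdc₂ : (v₁*(a-r₀)+v₂*c)*q + (v₁*b+v₂*(d-r₀))*(t-r₁⁻¹) = (r₀⁻¹-r₀)*(mu*u₂) := by
    linear_combination q*hvD1 + (t-r₁⁻¹)*hvD2 + (r₀⁻¹-r₀)*hm2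
  -- lam*mu = f₀*f₁ (trace identity)
  have hδtimes : lam*mu*(u₁*v₂-u₂*v₁) = (f₀*f₁)*(u₁*v₂-u₂*v₁) := by
    linear_combination -v₂*hg₁ + v₁*hg₂ - u₁*hvdc₂ + u₂*hvdc₁
      + (u₁*v₂-u₂*v₁)*((r₁-r₁⁻¹)*h2 + (r₀⁻¹-r₀)*h4 - hτ)
  have hlm : lam*mu = f₀*f₁ := mul_right_cancel₀ hδ hδtimes
  have hf₀ : f₀ ≠ 0 := left_ne_zero_of_mul hτ0
  have hlam : lam ≠ 0 := by
    intro h; exact hτ0 (by rw [← hlm, h, zero_mul])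
  obtain ⟨α, hα⟩ : ∃ α : ℂ, α^2 = f₀ / (lam * (u₁*v₂ - u₂*v₁)) :=
    IsAlgClosed.exists_pow_nat_eq _ (by norm_num : (0:ℕ) < 2)
  have hα' : α^2 * (lam * (u₁*v₂ - u₂*v₁)) = f₀ := by
    rw [hα]; field_simp
  set κ : ℂ := α*lam/f₀ with hκdef
  have hκ : f₀*κ = α*lam := by rw [hκdef]; field_simp
  refine ⟨α*u₁, α*u₂, κ*v₁, κ*v₂, ?_, ?_, ?_, ?_, ?_, ?_, ?_, ?_, ?_⟩
  · -- det
    have hakd : f₀*(α*u₁*(κ*v₂) - α*u₂*(κ*v₁)) = f₀*1 := by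
      linear_combination α*(u₁*v₂-u₂*v₁)*hκ + hα'
    linear_combination (mul_left_cancel₀ hf₀ hakd)
  · linear_combination α*hl1 - v₁*hκ
  · linear_combination α*hl2 - v₂*hκ
  · linear_combination κ*hvA1
  · linear_combination κ*hvA2
  · linear_combination α*huB1
  · linear_combination α*huB2
  · have hkm : f₀*(κ*mu) = f₀*(α*f₁) := by linear_combination mu*hκ + α*hlm
    linear_combination κ*hm1 + u₁*(mul_left_cancel₀ hf₀ hkm)
  · have hkm : f₀*(κ*mu) = f₀*(α*f₁) := by linear_combination mu*hκ + α*hlm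
    linear_combination κ*hm2 + u₂*(mul_left_cancel₀ hf₀ hkm)


-- part (i) as standalone lemma
lemma part_i (M₀ M₁ : Matrix (Fin 2) (Fin 2) ℂ) (r₀ r₁ : ℂ)
    (K : Matrix (Fin 2) (Fin 2) ℂ) (f₀ f₁ : ℂ) (hK : K.det = 1)
    (h₀ : K * M₀ = !![r₀, f₀; 0, r₀⁻¹] * K)
    (h₁ : K * M₁ = !![r₁, 0; f₁, r₁⁻¹] * K) :
    f₀ * f₁ = Matrix.trace ((M₁ - r₁ • (1 : Matrix (Fin 2) (Fin 2) ℂ)) * (M₀ - r₀⁻¹ • 1)) := by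
  have hKu : IsUnit K.det := by rw [hK]; exact isUnit_one
  have hA : K * (M₀ - r₀⁻¹ • 1) = (!![r₀, f₀; 0, r₀⁻¹] - r₀⁻¹ • 1) * K := by
    rw [Matrix.mul_sub, Matrix.sub_mul, h₀, mul_smul_comm, smul_mul_assoc,
      Matrix.mul_one, Matrix.one_mul]
  have hB : K * (M₁ - r₁ • 1) = (!![r₁, 0; f₁, r₁⁻¹] - r₁ • 1) * K := by
    rw [Matrix.mul_sub, Matrix.sub_mul, h₁, mul_smul_comm, smul_mul_assoc,
      Matrix.mul_one, Matrix.one_mul]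
  have hP : K * ((M₁ - r₁ • 1) * (M₀ - r₀⁻¹ • 1)) =
      ((!![r₁, 0; f₁, r₁⁻¹] - r₁ • 1) * (!![r₀, f₀; 0, r₀⁻¹] - r₀⁻¹ • 1)) * K := by
    rw [← Matrix.mul_assoc, hB, Matrix.mul_assoc, hA, ← Matrix.mul_assoc]
  have htr : Matrix.trace ((M₁ - r₁ • (1 : Matrix (Fin 2) (Fin 2) ℂ)) * (M₀ - r₀⁻¹ • 1)) =
      Matrix.trace ((!![r₁, 0; f₁, r₁⁻¹] - r₁ • 1) * (!![r₀, f₀; 0, r₀⁻¹] - r₀⁻¹ • 1)) := by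
    calc Matrix.trace ((M₁ - r₁ • (1 : Matrix (Fin 2) (Fin 2) ℂ)) * (M₀ - r₀⁻¹ • 1))
        = Matrix.trace (K⁻¹ * (K * ((M₁ - r₁ • 1) * (M₀ - r₀⁻¹ • 1)))) := by
          rw [← Matrix.mul_assoc, Matrix.nonsing_inv_mul K hKu, Matrix.one_mul]
      _ = Matrix.trace ((((!![r₁, 0; f₁, r₁⁻¹] - r₁ • 1) * (!![r₀, f₀; 0, r₀⁻¹] - r₀⁻¹ • 1)) * K) * K⁻¹) := by
          rw [hP, Matrix.trace_mul_comm]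
      _ = _ := by
          rw [Matrix.mul_assoc, Matrix.mul_nonsing_inv K hKu, Matrix.mul_one]
  rw [htr]
  simp [Matrix.trace_fin_two, Matrix.mul_apply, Fin.sum_univ_two, Matrix.sub_apply,
    Matrix.smul_apply, Matrix.one_apply]
  ring


lemma part_uniq (M₀ M₁ : Matrix (Fin 2) (Fin 2) ℂ) (r₀ r₁ : ℂ)
    (hr₁s : r₁ - r₁⁻¹ ≠ 0)
    (K K' : Matrix (Fin 2) (Fin 2) ℂ) (f₀ f₁ : ℂ) (hf₀ : f₀ ≠ 0)
    (hK : K.det = 1) (hK' : K'.det = 1)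
    (h₀ : K * M₀ = !![r₀, f₀; 0, r₀⁻¹] * K)
    (h₁ : K * M₁ = !![r₁, 0; f₁, r₁⁻¹] * K)
    (h₀' : K' * M₀ = !![r₀, f₀; 0, r₀⁻¹] * K')
    (h₁' : K' * M₁ = !![r₁, 0; f₁, r₁⁻¹] * K') :
    K' = K ∨ K' = -K := by
  have hKu : IsUnit K.det := by rw [hK]; exact isUnit_one
  have hKi : K * K⁻¹ = 1 := Matrix.mul_nonsing_inv K hKu
  have hKi' : K⁻¹ * K = 1 := Matrix.nonsing_inv_mul K hKu
  set L := K' * K⁻¹ with hLdef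
  have hLK : K' = L * K := by rw [hLdef, Matrix.mul_assoc, hKi', Matrix.mul_one]
  have comm : ∀ (N : Matrix (Fin 2) (Fin 2) ℂ) (Δ : Matrix (Fin 2) (Fin 2) ℂ),
      K * N = Δ * K → K' * N = Δ * K' → L * Δ = Δ * L := by
    intro N Δ hN hN'
    have e1 : K' * N * K⁻¹ = Δ * L := by
      rw [hN', Matrix.mul_assoc]
    have hN2 : N * K⁻¹ = K⁻¹ * Δ := by
      have h : K⁻¹ * (K * N) * K⁻¹ = K⁻¹ * (Δ * K) * K⁻¹ := by rw [hN]
      rw [← Matrix.mul_assoc K⁻¹ K N, hKi', Matrix.one_mul, ← Matrix.mul_assoc K⁻¹ Δ K,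
        Matrix.mul_assoc (K⁻¹ * Δ) K K⁻¹, hKi, Matrix.mul_one] at h
      exact h
    have e2 : K' * N * K⁻¹ = L * Δ := by
      rw [Matrix.mul_assoc, hN2, hLdef, Matrix.mul_assoc]
    rw [← e1, e2]
  have hL₀ := comm M₀ _ h₀ h₀'
  have hL₁ := comm M₁ _ h₁ h₁'
  have e00 : (L * !![r₀, f₀; 0, r₀⁻¹]) 0 0 = (!![r₀, f₀; 0, r₀⁻¹] * L) 0 0 := by rw [hL₀]
  have e01 : (L * !![r₀, f₀; 0, r₀⁻¹]) 0 1 = (!![r₀, f₀; 0, r₀⁻¹] * L) 0 1 := by rw [hL₀]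
  have f01 : (L * !![r₁, 0; f₁, r₁⁻¹]) 0 1 = (!![r₁, 0; f₁, r₁⁻¹] * L) 0 1 := by rw [hL₁]
  simp [Matrix.mul_apply, Fin.sum_univ_two] at e00 e01 f01
  -- e00 : L 0 0 * r₀ = r₀ * L 0 0 + f₀ * L 1 0
  -- f01 : L 0 1 * r₁⁻¹ = r₁ * L 0 1
  have hL10 : L 1 0 = 0 := by
    have : f₀ * L 1 0 = 0 := by linear_combination -e00
    rcases mul_eq_zero.1 this with h | h
    exacts [absurd h hf₀, h]
  have hL01 : L 0 1 = 0 := by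
    have : L 0 1 * (r₁ - r₁⁻¹) = 0 := by linear_combination -f01
    rcases mul_eq_zero.1 this with h | h
    exacts [h, absurd h hr₁s]
  have hL11 : L 1 1 = L 0 0 := by
    have : f₀ * (L 1 1 - L 0 0) = 0 := by linear_combination -e01 + (r₀⁻¹ - r₀)*hL01
    rcases mul_eq_zero.1 this with h | h
    exacts [absurd h hf₀, by linear_combination h]
  have hdetL : L.det = 1 := by
    rw [hLdef, Matrix.det_mul, hK', Matrix.det_nonsing_inv, hK]
    norm_num
  have hsq : L 0 0 * L 0 0 = 1 := by
    rw [Matrix.det_fin_two, hL10, hL01, hL11] at hdetL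
    linear_combination hdetL
  rcases mul_self_eq_one_iff.1 hsq with h | h
  · left
    have hL1 : L = 1 := by
      ext i j
      fin_cases i <;> fin_cases j <;>
        simp [hL10, hL01, hL11, h]
    rw [hLK, hL1, Matrix.one_mul]
  · right
    have hL1 : L = -1 := by
      ext i j
      fin_cases i <;> fin_cases j <;>
        simp [hL10, hL01, hL11, h]
    rw [hLK, hL1, Matrix.neg_mul, Matrix.one_mul]


theorem stmt13 (M₀ M₁ : Matrix (Fin 2) (Fin 2) ℂ)
    (hM₀ : M₀.det = 1) (hM₁ : M₁.det = 1)
    (r₀ r₁ : ℂ)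
    (hr₀0 : r₀ ≠ 0) (hr₀1 : r₀ ≠ 1) (hr₀m : r₀ ≠ -1)
    (hr₁0 : r₁ ≠ 0) (hr₁1 : r₁ ≠ 1) (hr₁m : r₁ ≠ -1)
    (htr₀ : M₀.trace = r₀ + r₀⁻¹) (htr₁ : M₁.trace = r₁ + r₁⁻¹)
    (htr1 : Matrix.trace ((M₀ - r₀⁻¹ • (1 : Matrix (Fin 2) (Fin 2) ℂ)) * (M₁ - r₁ • 1)) ≠ 0)
    (htr2 : Matrix.trace ((M₀ - r₀⁻¹ • (1 : Matrix (Fin 2) (Fin 2) ℂ)) * (M₁ - r₁⁻¹ • 1)) ≠ 0) :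
    (∀ (K : Matrix (Fin 2) (Fin 2) ℂ) (f₀ f₁ : ℂ), K.det = 1 →
      K * M₀ = !![r₀, f₀; 0, r₀⁻¹] * K →
      K * M₁ = !![r₁, 0; f₁, r₁⁻¹] * K →
      f₀ * f₁ = Matrix.trace ((M₁ - r₁ • (1 : Matrix (Fin 2) (Fin 2) ℂ)) * (M₀ - r₀⁻¹ • 1))) ∧
    Matrix.trace ((M₁ - r₁ • (1 : Matrix (Fin 2) (Fin 2) ℂ)) * (M₀ - r₀⁻¹ • 1)) ≠ 0 ∧
    (∀ f₀ f₁ : ℂ,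
      f₀ * f₁ = Matrix.trace ((M₁ - r₁ • (1 : Matrix (Fin 2) (Fin 2) ℂ)) * (M₀ - r₀⁻¹ • 1)) →
      (∃ K : Matrix (Fin 2) (Fin 2) ℂ, K.det = 1 ∧
        K * M₀ = !![r₀, f₀; 0, r₀⁻¹] * K ∧
        K * M₁ = !![r₁, 0; f₁, r₁⁻¹] * K) ∧
      (∀ K K' : Matrix (Fin 2) (Fin 2) ℂ, K.det = 1 → K'.det = 1 →
        K * M₀ = !![r₀, f₀; 0, r₀⁻¹] * K →
        K * M₁ = !![r₁, 0; f₁, r₁⁻¹] * K →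
        K' * M₀ = !![r₀, f₀; 0, r₀⁻¹] * K' →
        K' * M₁ = !![r₁, 0; f₁, r₁⁻¹] * K' →
        K' = K ∨ K' = -K)) := by
  have hs₀ : r₀ - r₀⁻¹ ≠ 0 := by
    intro h
    have hsq : r₀ * r₀ = 1 := by linear_combination r₀*h + mul_inv_cancel₀ hr₀0
    rcases mul_self_eq_one_iff.1 hsq with h' | h'
    exacts [hr₀1 h', hr₀m h']
  have hs₁ : r₁ - r₁⁻¹ ≠ 0 := by
    intro h
    have hsq : r₁ * r₁ = 1 := by linear_combination r₁*h + mul_inv_cancel₀ hr₁0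
    rcases mul_self_eq_one_iff.1 hsq with h' | h'
    exacts [hr₁1 h', hr₁m h']
  obtain ⟨a, b, c, d, rfl⟩ : ∃ a b c d, M₀ = !![a, b; c, d] :=
    ⟨_, _, _, _, M₀.eta_fin_two⟩
  obtain ⟨p, q, s, t, rfl⟩ : ∃ p q s t, M₁ = !![p, q; s, t] :=
    ⟨_, _, _, _, M₁.eta_fin_two⟩
  rw [Matrix.det_fin_two_of] at hM₀ hM₁
  rw [Matrix.trace_fin_two_of] at htr₀ htr₁
  have eτ : Matrix.trace ((!![p, q; s, t] - r₁ • (1 : Matrix (Fin 2) (Fin 2) ℂ)) *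
      (!![a, b; c, d] - r₀⁻¹ • 1)) =
      (a - r₀⁻¹)*(p - r₁) + b*s + c*q + (d - r₀⁻¹)*(t - r₁) := by
    simp [Matrix.trace_fin_two, Matrix.mul_apply, Fin.sum_univ_two, Matrix.sub_apply,
      Matrix.smul_apply, Matrix.one_apply]
    ring
  have eσ : Matrix.trace ((!![a, b; c, d] - r₀⁻¹ • (1 : Matrix (Fin 2) (Fin 2) ℂ)) *
      (!![p, q; s, t] - r₁⁻¹ • 1)) =
      (a - r₀⁻¹)*(p - r₁⁻¹) + b*s + c*q + (d - r₀⁻¹)*(t - r₁⁻¹) := by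
    simp [Matrix.trace_fin_two, Matrix.mul_apply, Fin.sum_univ_two, Matrix.sub_apply,
      Matrix.smul_apply, Matrix.one_apply]
    ring
  refine ⟨fun K f₀ f₁ hK h₀ h₁ => part_i _ _ r₀ r₁ K f₀ f₁ hK h₀ h₁, ?_, ?_⟩
  · rw [Matrix.trace_mul_comm]; exact htr1
  · intro f₀ f₁ hf
    have hτ0 : f₀ * f₁ ≠ 0 := by
      rw [hf, Matrix.trace_mul_comm]; exact htr1
    have hf₀ : f₀ ≠ 0 := left_ne_zero_of_mul hτ0
    constructor
    · have hτs : f₀ * f₁ = (a - r₀⁻¹)*(p - r₁) + b*s + c*q + (d - r₀⁻¹)*(t - r₁) := by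
        rw [hf, eτ]
      have hσs : (a - r₀⁻¹)*(p - r₁⁻¹) + b*s + c*q + (d - r₀⁻¹)*(t - r₁⁻¹) ≠ 0 :=
        eσ ▸ htr2
      obtain ⟨k₁, k₂, k₃, k₄, E1, E2, E3, E4, E5, E6, E7, E8, E9⟩ :=
        exists_k r₀ r₁ a b c d p q s t f₀ f₁ hr₀0 hr₁0 hs₀ hs₁ hM₀ htr₀ hM₁ htr₁ hσs hτs hτ0
      refine ⟨!![k₁, k₂; k₃, k₄], by rw [Matrix.det_fin_two_of]; exact E1, ?_, ?_⟩
      · ext i j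
        fin_cases i <;> fin_cases j
        · simp only [Matrix.mul_apply, Fin.sum_univ_two]
          simpa using E2
        · simp only [Matrix.mul_apply, Fin.sum_univ_two]
          simpa using E3
        · simp only [Matrix.mul_apply, Fin.sum_univ_two]
          simpa using E4
        · simp only [Matrix.mul_apply, Fin.sum_univ_two]
          simpa using E5
      · ext i j
        fin_cases i <;> fin_cases j
        · simp only [Matrix.mul_apply, Fin.sum_univ_two]
          simpa using E6
        · simp only [Matrix.mul_apply, Fin.sum_univ_two]
          simpa using E7
        · simp only [Matrix.mul_apply, Fin.sum_univ_two]
          simpa using E8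
        · simp only [Matrix.mul_apply, Fin.sum_univ_two]
          simpa using E9
    · intro K K' hK hK' h₀ h₁ h₀' h₁'
      exact part_uniq _ _ r₀ r₁ hs₁ K K' f₀ f₁ hf₀ hK hK' h₀ h₁ h₀' h₁'
end

section
/- If (K, f₀, f₁) is any solution of the simultaneous triangularization problem, then f₀·f₁ = (r₀ + r₁)(r₀⁻¹ + r₁⁻¹) − det(M₀ + M₁). -/
open Matrix Complex

theorem stmt14 (M₀ M₁ : Matrix (Fin 2) (Fin 2) ℂ)
    (hM₀ : M₀.det = 1) (hM₁ : M₁.det = 1)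
    (r₀ r₁ : ℂ)
    (hr₀0 : r₀ ≠ 0) (hr₀1 : r₀ ≠ 1) (hr₀m : r₀ ≠ -1)
    (hr₁0 : r₁ ≠ 0) (hr₁1 : r₁ ≠ 1) (hr₁m : r₁ ≠ -1)
    (htr₀ : M₀.trace = r₀ + r₀⁻¹) (htr₁ : M₁.trace = r₁ + r₁⁻¹)
    (K : Matrix (Fin 2) (Fin 2) ℂ) (f₀ f₁ : ℂ)
    (hK : K.det = 1)
    (h₀ : K * M₀ = !![r₀, f₀; 0, r₀⁻¹] * K)
    (h₁ : K * M₁ = !![r₁, 0; f₁, r₁⁻¹] * K) :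
    f₀ * f₁ = (r₀ + r₁) * (r₀⁻¹ + r₁⁻¹) - (M₀ + M₁).det := by
  have h : K * (M₀ + M₁) = (!![r₀, f₀; 0, r₀⁻¹] + !![r₁, 0; f₁, r₁⁻¹]) * K := by
    rw [mul_add, add_mul, h₀, h₁]
  have hd := congrArg Matrix.det h
  rw [Matrix.det_mul, Matrix.det_mul, hK, one_mul, mul_one] at hd
  rw [hd]
  simp [Matrix.det_fin_two, Matrix.add_apply]
end

section
/- If (M₀ − r₀)(M₁ − r₁) = 0, then there exist K ∈ SL(2,ℂ) and f₀ ∈ ℂ such that K·M₀·K⁻¹ = [[r₀, f₀], [0, r₀⁻¹]] and K·M₁·K⁻¹ = diag(r₁⁻¹, r₁); that is, although the original simultaneous triangularization problem is unsolvable, the modified problem in which the diagonal of the lower-triangular model matrix is replaced by (r₁⁻¹, r₁) is solvable with lower-left entry 0. -/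
open Matrix Complex

theorem stmt17 (M₀ M₁ : Matrix (Fin 2) (Fin 2) ℂ)
    (hM₀ : M₀.det = 1) (hM₁ : M₁.det = 1)
    (r₀ r₁ : ℂ)
    (hr₀0 : r₀ ≠ 0) (hr₀1 : r₀ ≠ 1) (hr₀m : r₀ ≠ -1)
    (hr₁0 : r₁ ≠ 0) (hr₁1 : r₁ ≠ 1) (hr₁m : r₁ ≠ -1)
    (htr₀ : M₀.trace = r₀ + r₀⁻¹) (htr₁ : M₁.trace = r₁ + r₁⁻¹)
    (h : (M₀ - r₀ • (1 : Matrix (Fin 2) (Fin 2) ℂ)) * (M₁ - r₁ • 1) = 0) :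
    ∃ (K : Matrix (Fin 2) (Fin 2) ℂ) (f₀ : ℂ), K.det = 1 ∧
      K * M₀ * K⁻¹ = !![r₀, f₀; 0, r₀⁻¹] ∧
      K * M₁ * K⁻¹ = !![r₁⁻¹, 0; 0, r₁] := by
  have hs : r₁ * r₁⁻¹ = 1 := mul_inv_cancel₀ hr₁0
  have hsr : r₁⁻¹ - r₁ ≠ 0 := by
    intro hh
    have h1 : r₁⁻¹ = r₁ := sub_eq_zero.mp hh
    have h2 : r₁ * r₁ = 1 := by rw [← hs, h1]
    rcases mul_self_eq_one_iff.mp h2 with h3 | h3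
    · exact hr₁1 h3
    · exact hr₁m h3
  have ht1 : M₁ 0 0 + M₁ 1 1 = r₁ + r₁⁻¹ := by simpa [Matrix.trace_fin_two] using htr₁
  have hd1 : M₁ 0 0 * M₁ 1 1 - M₁ 0 1 * M₁ 1 0 = 1 := by simpa [Matrix.det_fin_two] using hM₁
  set N : Matrix (Fin 2) (Fin 2) ℂ := M₁ - r₁ • 1 with hNdef
  set N' : Matrix (Fin 2) (Fin 2) ℂ := M₁ - r₁⁻¹ • 1 with hN'def
  have hN : M₁ * N = r₁⁻¹ • N := by
    ext i j
    fin_cases i <;> fin_cases j <;>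
      simp [hNdef, Matrix.mul_apply, Fin.sum_univ_two, Matrix.one_apply, Matrix.sub_apply,
        Matrix.smul_apply]
    · linear_combination M₁ 0 0 * ht1 - hd1 + hs
    · linear_combination M₁ 0 1 * ht1
    · linear_combination M₁ 1 0 * ht1
    · linear_combination M₁ 1 1 * ht1 - hd1 + hs
  have hN' : M₁ * N' = r₁ • N' := by
    ext i j
    fin_cases i <;> fin_cases j <;>
      simp [hN'def, Matrix.mul_apply, Fin.sum_univ_two, Matrix.one_apply, Matrix.sub_apply,
        Matrix.smul_apply]
    · linear_combination M₁ 0 0 * ht1 - hd1 + hs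
    · linear_combination M₁ 0 1 * ht1
    · linear_combination M₁ 1 0 * ht1
    · linear_combination M₁ 1 1 * ht1 - hd1 + hs
  have hM0N : M₀ * N = r₀ • N := by
    have h2 : M₀ * N - r₀ • N = 0 := by
      rw [← h]; simp [sub_mul, Matrix.smul_mul, hNdef]
    exact sub_eq_zero.mp h2
  -- entrywise versions
  have EM1 : ∀ i j, M₁ i 0 * N 0 j + M₁ i 1 * N 1 j = r₁⁻¹ * N i j := by
    intro i j
    have := congrFun (congrFun hN i) j
    simpa [Matrix.mul_apply, Fin.sum_univ_two] using this
  have EM1' : ∀ i j, M₁ i 0 * N' 0 j + M₁ i 1 * N' 1 j = r₁ * N' i j := by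
    intro i j
    have := congrFun (congrFun hN' i) j
    simpa [Matrix.mul_apply, Fin.sum_univ_two] using this
  have EM0 : ∀ i j, M₀ i 0 * N 0 j + M₀ i 1 * N 1 j = r₀ * N i j := by
    intro i j
    have := congrFun (congrFun hM0N i) j
    simpa [Matrix.mul_apply, Fin.sum_univ_two] using this
  -- choose nonzero columns
  have htrN : N 0 0 + N 1 1 = r₁⁻¹ - r₁ := by
    simp [hNdef, Matrix.sub_apply, Matrix.smul_apply, Matrix.one_apply]
    linear_combination ht1
  have htrN' : N' 0 0 + N' 1 1 = r₁ - r₁⁻¹ := by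
    simp [hN'def, Matrix.sub_apply, Matrix.smul_apply, Matrix.one_apply]
    linear_combination ht1
  have hjN : ∃ j, N 0 j ≠ 0 ∨ N 1 j ≠ 0 := by
    by_cases h0 : N 0 0 = 0
    · refine ⟨1, Or.inr ?_⟩
      intro h1; rw [h0, h1] at htrN
      exact hsr (by linear_combination -htrN)
    · exact ⟨0, Or.inl h0⟩
  have hjN' : ∃ j, N' 0 j ≠ 0 ∨ N' 1 j ≠ 0 := by
    by_cases h0 : N' 0 0 = 0
    · refine ⟨1, Or.inr ?_⟩
      intro h1; rw [h0, h1] at htrN'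
      exact hsr (by linear_combination htrN')
    · exact ⟨0, Or.inl h0⟩
  obtain ⟨j, hac⟩ := hjN
  obtain ⟨j', hbd⟩ := hjN'
  set a := N 0 j with ha
  set c := N 1 j with hc
  set b := N' 0 j' with hb
  set d := N' 1 j' with hd
  have E1 : M₁ 0 0 * a + M₁ 0 1 * c = r₁⁻¹ * a := EM1 0 j
  have E2 : M₁ 1 0 * a + M₁ 1 1 * c = r₁⁻¹ * c := EM1 1 j
  have F1 : M₁ 0 0 * b + M₁ 0 1 * d = r₁ * b := EM1' 0 j'
  have F2 : M₁ 1 0 * b + M₁ 1 1 * d = r₁ * d := EM1' 1 j'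
  have E3 : M₀ 0 0 * a + M₀ 0 1 * c = r₀ * a := EM0 0 j
  have E4 : M₀ 1 0 * a + M₀ 1 1 * c = r₀ * c := EM0 1 j
  -- δ ≠ 0
  have hδ : a * d - b * c ≠ 0 := by
    intro hz
    have had : a * d * (r₁⁻¹ - r₁) = 0 := by
      linear_combination c * F1 - d * E1 + M₁ 0 0 * hz - r₁ * hz
    have hab : a * b * (r₁⁻¹ - r₁) = 0 := by
      linear_combination a * F1 - b * E1 - M₁ 0 1 * hz
    have hcd : c * d * (r₁⁻¹ - r₁) = 0 := by
      linear_combination c * F2 - d * E2 + M₁ 1 0 * hz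
    have had0 : a * d = 0 := by
      rcases mul_eq_zero.mp had with h' | h'
      · exact h'
      · exact absurd h' hsr
    have hab0 : a * b = 0 := by
      rcases mul_eq_zero.mp hab with h' | h'
      · exact h'
      · exact absurd h' hsr
    have hcd0 : c * d = 0 := by
      rcases mul_eq_zero.mp hcd with h' | h'
      · exact h'
      · exact absurd h' hsr
    have hbc0 : b * c = 0 := by linear_combination had0 - hz
    rcases hac with hA | hC
    · rcases hbd with hB | hD
      · exact hB (by rcases mul_eq_zero.mp hab0 with h'|h'; exacts [absurd h' hA, h'])
      · exact hD (by rcases mul_eq_zero.mp had0 with h'|h'; exacts [absurd h' hA, h'])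
    · rcases hbd with hB | hD
      · exact hB (by rcases mul_eq_zero.mp hbc0 with h'|h'; exacts [h', absurd h' hC])
      · exact hD (by rcases mul_eq_zero.mp hcd0 with h'|h'; exacts [absurd h' hC, h'])
  have hdp : (a * d - b * c)⁻¹ * a * d - b * ((a * d - b * c)⁻¹ * c) = 1 := by
    field_simp
  set e : ℂ := (a * d - b * c)⁻¹ with hedef
  have detK : (!![d, -b; -(e * c), e * a] : Matrix (Fin 2) (Fin 2) ℂ).det = 1 := by
    rw [Matrix.det_fin_two_of]; linear_combination hdp
  have detP : (!![e * a, b; e * c, d] : Matrix (Fin 2) (Fin 2) ℂ).det = 1 := by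
    rw [Matrix.det_fin_two_of]; linear_combination hdp
  have hKinv : (!![d, -b; -(e * c), e * a] : Matrix (Fin 2) (Fin 2) ℂ)⁻¹
      = !![e * a, b; e * c, d] := by
    rw [Matrix.inv_def, detK, Matrix.adjugate_fin_two_of]
    simp
  set K : Matrix (Fin 2) (Fin 2) ℂ := !![d, -b; -(e * c), e * a] with hKdef
  set P : Matrix (Fin 2) (Fin 2) ℂ := !![e * a, b; e * c, d] with hPdef
  have hM₀e := Matrix.eta_fin_two M₀
  have hM₁e := Matrix.eta_fin_two M₁
  have hKM₀P : K * M₀ * P = !![d, -b; -(e * c), e * a] * !![M₀ 0 0, M₀ 0 1; M₀ 1 0, M₀ 1 1] * !![e * a, b; e * c, d] := by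
    rw [hKdef, hPdef, ← hM₀e]
  have hKM₁P : K * M₁ * P = !![d, -b; -(e * c), e * a] * !![M₁ 0 0, M₁ 0 1; M₁ 1 0, M₁ 1 1] * !![e * a, b; e * c, d] := by
    rw [hKdef, hPdef, ← hM₁e]
  have t00 : (K * M₀ * P) 0 0 = r₀ := by
    rw [hKM₀P, Matrix.mul_fin_two, Matrix.mul_fin_two]
    simp only [Matrix.of_apply, Matrix.cons_val', Matrix.cons_val_zero, Matrix.cons_val_one, Matrix.head_cons,
      Matrix.empty_val', Matrix.cons_val_fin_one, Matrix.head_fin_const]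
    linear_combination e * d * E3 - e * b * E4 + r₀ * hdp
  have t10 : (K * M₀ * P) 1 0 = 0 := by
    rw [hKM₀P, Matrix.mul_fin_two, Matrix.mul_fin_two]
    simp only [Matrix.of_apply, Matrix.cons_val', Matrix.cons_val_zero, Matrix.cons_val_one, Matrix.head_cons,
      Matrix.empty_val', Matrix.cons_val_fin_one, Matrix.head_fin_const]
    linear_combination (e * a * e) * E4 - (e * c * e) * E3
  have hdT : (K * M₀ * P).det = 1 := by
    rw [Matrix.det_mul, Matrix.det_mul, detK, hM₀, detP]; ring
  have t11 : (K * M₀ * P) 1 1 = r₀⁻¹ := by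
    have h5 : r₀ * ((K * M₀ * P) 1 1) = 1 := by
      rw [Matrix.det_fin_two, t00, t10] at hdT
      linear_combination hdT
    exact (inv_eq_of_mul_eq_one_right h5).symm
  have s00 : (K * M₁ * P) 0 0 = r₁⁻¹ := by
    rw [hKM₁P, Matrix.mul_fin_two, Matrix.mul_fin_two]
    simp only [Matrix.of_apply, Matrix.cons_val', Matrix.cons_val_zero, Matrix.cons_val_one, Matrix.head_cons,
      Matrix.empty_val', Matrix.cons_val_fin_one, Matrix.head_fin_const]
    linear_combination e * d * E1 - e * b * E2 + r₁⁻¹ * hdp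
  have s10 : (K * M₁ * P) 1 0 = 0 := by
    rw [hKM₁P, Matrix.mul_fin_two, Matrix.mul_fin_two]
    simp only [Matrix.of_apply, Matrix.cons_val', Matrix.cons_val_zero, Matrix.cons_val_one, Matrix.head_cons,
      Matrix.empty_val', Matrix.cons_val_fin_one, Matrix.head_fin_const]
    linear_combination (e * a * e) * E2 - (e * c * e) * E1
  have s01 : (K * M₁ * P) 0 1 = 0 := by
    rw [hKM₁P, Matrix.mul_fin_two, Matrix.mul_fin_two]
    simp only [Matrix.of_apply, Matrix.cons_val', Matrix.cons_val_zero, Matrix.cons_val_one, Matrix.head_cons,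
      Matrix.empty_val', Matrix.cons_val_fin_one, Matrix.head_fin_const]
    linear_combination d * F1 - b * F2
  have s11 : (K * M₁ * P) 1 1 = r₁ := by
    rw [hKM₁P, Matrix.mul_fin_two, Matrix.mul_fin_two]
    simp only [Matrix.of_apply, Matrix.cons_val', Matrix.cons_val_zero, Matrix.cons_val_one, Matrix.head_cons,
      Matrix.empty_val', Matrix.cons_val_fin_one, Matrix.head_fin_const]
    linear_combination (e * a) * F2 - (e * c) * F1 + r₁ * hdp
  refine ⟨K, (K * M₀ * P) 0 1, detK, ?_, ?_⟩
  · rw [hKinv]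
    ext i j
    fin_cases i <;> fin_cases j
    · simpa using t00
    · simp
    · simpa using t10
    · simpa using t11
  · rw [hKinv]
    ext i j
    fin_cases i <;> fin_cases j
    · simpa using s00
    · simpa using s01
    · simpa using s10
    · simpa using s11
end
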